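/- arXiv:1705.00434 — 13 statements merged into one kernel-verified Lean document; each statement's English description precedes it below -/
import Mathlib

section
/- Let Y be a finite set with at least two elements, F : Y → ℝ a function, β ∈ ℝ, and c : Y → ℝⁿ vectors such that for every unit vector v ∈ ℝⁿ there exists s ∈ Y with v · c(s) > 0. Then the function u ↦ ∑_{s∈Y} exp(u·c(s) − βF(s)) on ℝⁿ tends to infinity as ‖u‖ → ∞, and it attains a unique global minimum at the unique point u(β) where ∑_{s∈Y} c(s) exp(u(β)·c(s) − βF(s)) = 0. -/
open Real Filter
open scoped InnerProductSpace BigOperators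

/-!
The function is a finite sum of exponentials of affine functions of `u`. Since no nonzero
direction `v` has `⟪v, c s⟫ ≤ 0` for all `s`, a compactness argument on the unit sphere gives
`ε > 0` with `max_s ⟪u, c s⟫ ≥ ε ‖u‖`, so the sum grows at least like `exp (ε ‖u‖)`; hence it has
a global minimiser. The same hypothesis separates points by the linear forms `⟪·, c s⟫`, which makes
the sum strictly convex, so the minimiser is unique and strict, and it is the critical point.
-/

section PartitionFn

variable {E : Type*} [NormedAddCommGroup E] [InnerProductSpace ℝ E] {Y : Type*}

theorem exists_pos_inner_of_ne_zero {c : Y → E} (hc : ∀ v : E, ‖v‖ = 1 → ∃ s, 0 < ⟪v, c s⟫_ℝ)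
    {v : E} (hv : v ≠ 0) : ∃ s, 0 < ⟪v, c s⟫_ℝ := by
  have hnorm : 0 < ‖v‖ := norm_pos_iff.2 hv
  obtain ⟨s, hs⟩ := hc (‖v‖⁻¹ • v) (by simp [norm_smul, hnorm.ne'])
  rw [real_inner_smul_left] at hs
  exact ⟨s, pos_of_mul_pos_right hs (inv_pos.2 hnorm).le⟩

variable [Fintype Y]

noncomputable def partitionFn (c : Y → E) (a : Y → ℝ) (u : E) : ℝ :=
  ∑ s, exp (⟪u, c s⟫_ℝ - a s)

theorem continuous_partitionFn (c : Y → E) (a : Y → ℝ) : Continuous (partitionFn c a) :=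
  continuous_finsetSum _ fun _ _ =>
    continuous_exp.comp ((continuous_id.inner continuous_const).sub continuous_const)

theorem exists_pos_mul_norm_le_inner [ProperSpace E] {c : Y → E}
    (hc : ∀ v : E, v ≠ 0 → ∃ s, 0 < ⟪v, c s⟫_ℝ) :
    ∃ ε > 0, ∀ u : E, u ≠ 0 → ∃ s, ε * ‖u‖ ≤ ⟪u, c s⟫_ℝ := by
  rcases (Metric.sphere (0 : E) 1).eq_empty_or_nonempty with hempty | ⟨v, hv⟩
  · refine ⟨1, one_pos, fun u hu => absurd hempty (Set.nonempty_iff_ne_empty.1 ?_)⟩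
    exact ⟨‖u‖⁻¹ • u, by simp [norm_smul, hu]⟩
  have hY : (Finset.univ : Finset Y).Nonempty :=
    let ⟨s, _⟩ := hc v (ne_zero_of_mem_unit_sphere ⟨v, hv⟩); ⟨s, Finset.mem_univ s⟩
  let φ : E → ℝ := fun w => Finset.univ.sup' hY fun s => ⟪w, c s⟫_ℝ
  have hφ : Continuous φ :=
    Continuous.finset_sup'_apply hY fun s _ => continuous_id.inner continuous_const
  obtain ⟨v₀, hv₀, hmin⟩ :=
    (isCompact_sphere (0 : E) 1).exists_isMinOn ⟨v, hv⟩ hφ.continuousOn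
  obtain ⟨s₀, hs₀⟩ := hc v₀ (ne_zero_of_mem_unit_sphere ⟨v₀, hv₀⟩)
  refine ⟨φ v₀, hs₀.trans_le (Finset.le_sup' (fun s => ⟪v₀, c s⟫_ℝ) (Finset.mem_univ s₀)),
    fun u hu => ?_⟩
  have hnorm : 0 < ‖u‖ := norm_pos_iff.2 hu
  obtain ⟨s, -, hs⟩ := Finset.exists_mem_eq_sup' hY fun s => ⟪‖u‖⁻¹ • u, c s⟫_ℝ
  have hle : φ v₀ ≤ ‖u‖⁻¹ * ⟪u, c s⟫_ℝ := by
    rw [← real_inner_smul_left, ← hs]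
    exact hmin (by simp [norm_smul, hnorm.ne'])
  refine ⟨s, ?_⟩
  calc φ v₀ * ‖u‖ ≤ ‖u‖⁻¹ * ⟪u, c s⟫_ℝ * ‖u‖ := mul_le_mul_of_nonneg_right hle hnorm.le
    _ = ⟪u, c s⟫_ℝ := by field_simp

theorem tendsto_partitionFn [ProperSpace E] {c : Y → E}
    (hc : ∀ v : E, v ≠ 0 → ∃ s, 0 < ⟪v, c s⟫_ℝ) (a : Y → ℝ) :
    Tendsto (partitionFn c a) (comap norm atTop) atTop := by
  obtain ⟨ε, hε, hεc⟩ := exists_pos_mul_norm_le_inner hc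
  obtain ⟨B, hB⟩ := (Set.finite_range a).bddAbove
  have hlower : ∀ u : E, u ≠ 0 → exp (ε * ‖u‖ - B) ≤ partitionFn c a u := fun u hu => by
    obtain ⟨s, hs⟩ := hεc u hu
    calc exp (ε * ‖u‖ - B) ≤ exp (⟪u, c s⟫_ℝ - a s) :=
          exp_le_exp.2 (by linarith [hB (Set.mem_range_self s)])
      _ ≤ partitionFn c a u :=
          Finset.single_le_sum (f := fun t => exp (⟪u, c t⟫_ℝ - a t))
            (fun t _ => (exp_pos _).le) (Finset.mem_univ s)
  have hexp : Tendsto (fun u : E => exp (ε * ‖u‖ - B)) (comap norm atTop) atTop :=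
    tendsto_exp_atTop.comp <| tendsto_atTop_add_const_right _ _ <|
      (tendsto_const_mul_atTop_of_pos hε).2 tendsto_comap
  have hne : ∀ᶠ u : E in comap norm atTop, u ≠ 0 :=
    (tendsto_comap.eventually (eventually_gt_atTop 0)).mono fun u hu => norm_pos_iff.1 hu
  exact tendsto_atTop_mono' _ (hne.mono hlower) hexp

theorem strictConvexOn_partitionFn {c : Y → E} (hc : ∀ v : E, v ≠ 0 → ∃ s, ⟪v, c s⟫_ℝ ≠ 0)
    (a : Y → ℝ) : StrictConvexOn ℝ Set.univ (partitionFn c a) := by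
  refine ⟨convex_univ, fun x _ y _ hxy p q hp hq hpq => ?_⟩
  obtain ⟨s₀, hs₀⟩ := hc (x - y) (sub_ne_zero.2 hxy)
  have hsplit : ∀ s, ⟪p • x + q • y, c s⟫_ℝ - a s =
      p * (⟪x, c s⟫_ℝ - a s) + q * (⟪y, c s⟫_ℝ - a s) := fun s => by
    rw [inner_add_left, real_inner_smul_left, real_inner_smul_left]
    linear_combination a s * hpq
  simp only [partitionFn, smul_eq_mul, Finset.mul_sum, ← Finset.sum_add_distrib, hsplit]
  refine Finset.sum_lt_sum (fun s _ => convexOn_exp.2 trivial trivial hp.le hq.le hpq)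
    ⟨s₀, Finset.mem_univ _, strictConvexOn_exp.2 trivial trivial ?_ hp hq hpq⟩
  rw [inner_sub_left] at hs₀
  exact fun h => hs₀ (by linarith)

theorem hasFDerivAt_partitionFn (c : Y → E) (a : Y → ℝ) (u : E) :
    HasFDerivAt (partitionFn c a)
      (∑ s, exp (⟪u, c s⟫_ℝ - a s) • innerSL ℝ (c s)) u := by
  refine HasFDerivAt.fun_sum fun s _ => HasFDerivAt.exp ?_
  have hinner : HasFDerivAt (fun w : E => ⟪w, c s⟫_ℝ) (innerSL ℝ (c s)) u := by
    convert (innerSL ℝ (c s)).hasFDerivAt using 1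
    ext w
    exact real_inner_comm _ _
  exact hinner.sub_const (a s)

theorem IsLocalMin.sum_exp_smul_eq_zero {c : Y → E} {a : Y → ℝ} {u : E}
    (h : IsLocalMin (partitionFn c a) u) : ∑ s, exp (⟪u, c s⟫_ℝ - a s) • c s = 0 := by
  have hderiv := h.hasFDerivAt_eq_zero (hasFDerivAt_partitionFn c a u)
  have happly : ∀ w : E, (∑ s, exp (⟪u, c s⟫_ℝ - a s) • innerSL ℝ (c s)) w =
      ⟪∑ s, exp (⟪u, c s⟫_ℝ - a s) • c s, w⟫_ℝ := fun w => by
    simp [sum_inner, real_inner_smul_left]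
  exact inner_self_eq_zero.1 ((happly _).symm.trans (by rw [hderiv]; rfl))

end PartitionFn

theorem StrictConvexOn.lt_of_forall_le {E : Type*} [AddCommGroup E] [Module ℝ E] {f : E → ℝ}
    (hf : StrictConvexOn ℝ Set.univ f) {x y : E} (hx : ∀ w, f x ≤ f w) (hy : y ≠ x) :
    f x < f y :=
  lt_of_not_ge fun h =>
    hy (hf.eq_of_isMinOn (fun w _ => h.trans (hx w)) (fun w _ => hx w) trivial trivial)

theorem stmt0_general (n : ℕ) (Y : Type*) [Fintype Y]
    (F : Y → ℝ) (β : ℝ) (c : Y → EuclideanSpace ℝ (Fin n))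
    (hc : ∀ v : EuclideanSpace ℝ (Fin n), ‖v‖ = 1 → ∃ s, 0 < ⟪v, c s⟫_ℝ) :
    Filter.Tendsto (fun u : EuclideanSpace ℝ (Fin n) => ∑ s, Real.exp (⟪u, c s⟫_ℝ - β * F s))
      (Filter.comap norm Filter.atTop) Filter.atTop ∧
    ∃! u₀ : EuclideanSpace ℝ (Fin n),
      (∑ s, Real.exp (⟪u₀, c s⟫_ℝ - β * F s) • c s = 0) ∧
      ∀ u, u ≠ u₀ →
        ∑ s, Real.exp (⟪u₀, c s⟫_ℝ - β * F s) < ∑ s, Real.exp (⟪u, c s⟫_ℝ - β * F s) := by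
  have hpos : ∀ v, v ≠ 0 → ∃ s, 0 < ⟪v, c s⟫_ℝ := fun v hv => exists_pos_inner_of_ne_zero hc hv
  have htendsto := tendsto_partitionFn hpos fun s => β * F s
  have hconvex := strictConvexOn_partitionFn (fun v hv => (hpos v hv).imp fun _ => ne_of_gt)
    fun s => β * F s
  obtain ⟨u₀, hmin⟩ := (continuous_partitionFn c fun s => β * F s).exists_forall_le
    (by rwa [comap_norm_atTop, Metric.cobounded_eq_cocompact] at htendsto)
  have hstrict : ∀ u, u ≠ u₀ → partitionFn c (fun s => β * F s) u₀ <
      partitionFn c (fun s => β * F s) u := fun u hu => hconvex.lt_of_forall_le hmin hu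
  refine ⟨htendsto, u₀, ⟨IsLocalMin.sum_exp_smul_eq_zero (Eventually.of_forall hmin), hstrict⟩,
    fun u ⟨_, hu⟩ => ?_⟩
  by_contra hne
  exact (hu u₀ (Ne.symm hne)).asymm (hstrict u hne)

theorem stmt0 (n : ℕ) (hn : 0 < n) (Y : Type*) [Fintype Y] (hY : 2 ≤ Fintype.card Y)
    (F : Y → ℝ) (β : ℝ) (c : Y → EuclideanSpace ℝ (Fin n))
    (hc : ∀ v : EuclideanSpace ℝ (Fin n), ‖v‖ = 1 → ∃ s, 0 < ⟪v, c s⟫_ℝ) :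
    Filter.Tendsto (fun u : EuclideanSpace ℝ (Fin n) => ∑ s, Real.exp (⟪u, c s⟫_ℝ - β * F s))
      (Filter.comap norm Filter.atTop) Filter.atTop ∧
    ∃! u₀ : EuclideanSpace ℝ (Fin n),
      (∑ s, Real.exp (⟪u₀, c s⟫_ℝ - β * F s) • c s = 0) ∧
      ∀ u, u ≠ u₀ →
        ∑ s, Real.exp (⟪u₀, c s⟫_ℝ - β * F s) < ∑ s, Real.exp (⟪u, c s⟫_ℝ - β * F s) :=
  stmt0_general n Y F β c hc
end

section
/- Let Y be a finite set, F : Y → ℝ, and c : Y → ℝⁿ such that for every unit vector v there is an s ∈ Y with v·c(s) > 0. Suppose u(β) is the minimizer of u ↦ ∑_{s∈Y} exp(u·c(s) − βF(s)) and that ∑_{s∈Y} exp(u(β)·c(s) − βF(s)) < 1. Then for every unit vector v ∈ ℝⁿ there is a unique t_β(v) > 0 such that ∑_{s∈Y} exp((u(β)+t_β(v)v)·c(s) − βF(s)) = 1, and the map v ↦ u(β) + t_β(v)v is a homeomorphism from the sphere S^{n−1} onto the set Q(β) = { u ∈ ℝⁿ : ∑_{s∈Y} exp(u·c(s) − βF(s))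 = 1 }. -/
/-!
The function `Z(u) = ∑ exp (⟪u, c s⟫ - β F s)` is convex, so along every ray from its strict
minimizer `u(β)` it is strictly increasing; the condition on `c` forces it above `1` far out on
each ray, so each ray crosses the level set `Q(β) = {Z = 1}` exactly once. The same condition
gives `ε > 0` with `∑ max ⟪u, c s⟫ 0 ≥ ε ‖u‖`, which bounds `Q(β)`. Hence `Q(β)` is compact and
the radial projection `Q(β) → S^{n-1}` is a continuous bijection onto a Hausdorff space, i.e. a
homeomorphism.
-/

open Real Filter
open scoped InnerProductSpace BigOperators

open Set Metric

theorem ConvexOn.strictMonoOn_ray_of_isStrictMin {E : Type*} [AddCommGroup E] [Module ℝ E]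
    {f : E → ℝ} (hf : ConvexOn ℝ univ f) {x₀ v : E} (hmin : ∀ u, u ≠ x₀ → f x₀ < f u)
    (hv : v ≠ 0) : StrictMonoOn (fun t : ℝ => f (x₀ + t • v)) (Ici 0) := by
  have hray : ∀ t : ℝ, 0 < t → f x₀ < f (x₀ + t • v) := fun t ht =>
    hmin _ (by simpa [ht.ne'] using hv)
  have hline : ConvexOn ℝ univ (fun t : ℝ => f (x₀ + t • v)) := by
    have hcomp := hf.comp_affineMap (AffineMap.lineMap x₀ (x₀ + v))
    have heq : f ∘ AffineMap.lineMap x₀ (x₀ + v) = fun t : ℝ => f (x₀ + t • v) := by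
      ext t
      simp [AffineMap.lineMap_apply_module', add_comm]
    rwa [heq, preimage_univ] at hcomp
  intro t₁ ht₁ t₂ _ h12
  rcases (mem_Ici.1 ht₁).eq_or_lt with rfl | ht₁pos
  · simpa using hray t₂ h12
  · refine hline.lt_right_of_left_lt (x := 0) (mem_univ _) (mem_univ _) ?_ ?_
    · rw [openSegment_eq_Ioo (ht₁pos.trans h12)]
      exact ⟨ht₁pos, h12⟩
    · simpa using hray t₁ ht₁pos

theorem existsUnique_pos_eq_of_strictMonoOn {g : ℝ → ℝ} {y t₁ : ℝ} (hg : Continuous g)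
    (hmono : StrictMonoOn g (Ici 0)) (h0 : g 0 < y) (ht₁ : 0 ≤ t₁) (hy : y ≤ g t₁) :
    ∃! t, 0 < t ∧ g t = y := by
  obtain ⟨t, ht, hgt⟩ := intermediate_value_Icc ht₁ hg.continuousOn ⟨h0.le, hy⟩
  have htpos : 0 < t := ht.1.lt_of_ne (by rintro rfl; exact h0.ne hgt)
  exact ⟨t, ⟨htpos, hgt⟩, fun t' ⟨ht', hgt'⟩ => hmono.injOn ht'.le htpos.le (hgt'.trans hgt.symm)⟩

section Sphere

variable {E : Type*} [NormedAddCommGroup E] [NormedSpace ℝ E]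

theorem exists_pos_mul_norm_le_of_pos_on_sphere [FiniteDimensional ℝ E] {g : E → ℝ}
    (hg : Continuous g) (hhom : ∀ (r : ℝ) (x : E), 0 ≤ r → g (r • x) = r * g x)
    (hpos : ∀ x : E, ‖x‖ = 1 → 0 < g x) : ∃ ε > 0, ∀ x, ε * ‖x‖ ≤ g x := by
  obtain ⟨ε, hε, hεle⟩ := (isCompact_sphere (0 : E) 1).exists_forall_le' hg.continuousOn
    fun x hx => hpos x (mem_sphere_zero_iff_norm.1 hx)
  refine ⟨ε, hε, fun x => ?_⟩
  rcases eq_or_ne x 0 with rfl | hx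
  · have hg0 : g 0 = 0 := by simpa using hhom 0 0 le_rfl
    simp [hg0]
  · have : ε ≤ g (‖x‖⁻¹ • x) :=
      hεle _ (mem_sphere_zero_iff_norm.2 (norm_smul_inv_norm (𝕜 := ℝ) hx))
    rwa [hhom _ _ (by positivity), ← div_eq_inv_mul, le_div_iff₀ (norm_pos_iff.2 hx)] at this

theorem exists_homeomorph_sphere_of_existsUnique_ray {Q : Set E} (hQ : IsCompact Q) {x₀ : E}
    (hx₀ : x₀ ∉ Q) {T : E → ℝ}
    (hT : ∀ v, ‖v‖ = 1 → 0 < T v ∧ x₀ + T v • v ∈ Q ∧ ∀ t, 0 < t → x₀ + t • v ∈ Q → t = T v) :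
    ∃ H : sphere (0 : E) 1 ≃ₜ Q, ∀ v, (H v : E) = x₀ + T v • v := by
  have hne : ∀ u : Q, (u : E) - x₀ ≠ 0 := fun u => sub_ne_zero.2 (ne_of_mem_of_not_mem u.2 hx₀)
  have hdir : ∀ u : Q, ‖(u : E) - x₀‖⁻¹ • ((u : E) - x₀) ∈ sphere (0 : E) 1 := fun u =>
    mem_sphere_zero_iff_norm.2 (norm_smul_inv_norm (hne u))
  let e : Q ≃ sphere (0 : E) 1 :=
    { toFun := fun u => ⟨_, hdir u⟩
      invFun := fun v => ⟨x₀ + T v • v, (hT v (norm_eq_of_mem_sphere v)).2.1⟩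
      left_inv := fun u => by
        set r := ‖(u : E) - x₀‖
        set w := r⁻¹ • ((u : E) - x₀)
        have hr : 0 < r := norm_pos_iff.2 (hne u)
        have hu : x₀ + r • w = u := by rw [smul_inv_smul₀ hr.ne', add_sub_cancel]
        have hrT := (hT w (mem_sphere_zero_iff_norm.1 (hdir u))).2.2 r hr (by rw [hu]; exact u.2)
        exact Subtype.ext (by simp only; rw [← hrT, hu])
      right_inv := fun v => by
        have hv := norm_eq_of_mem_sphere v
        have hTv := (hT v hv).1
        ext1
        simp only [add_sub_cancel_left, norm_smul, hv, norm_of_nonneg hTv.le, mul_one]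
        exact inv_smul_smul₀ hTv.ne' _ }
  have he : Continuous e := by
    refine Continuous.subtype_mk ?_ _
    have hsub : Continuous fun u : Q => (u : E) - x₀ := by fun_prop
    exact (hsub.norm.inv₀ fun u => norm_ne_zero_iff.2 (hne u)).smul hsub
  have : CompactSpace Q := isCompact_iff_compactSpace.1 hQ
  exact ⟨(he.homeoOfEquivCompactToT2 (f := e)).symm, fun _ => rfl⟩

end Sphere

section ExpSum

variable {E Y : Type*} [NormedAddCommGroup E] [InnerProductSpace ℝ E] [Fintype Y]

noncomputable def expSum (c : Y → E) (a : Y → ℝ) (u : E) : ℝ :=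
  ∑ s, exp (⟪u, c s⟫_ℝ - a s)

variable (c : Y → E) (a : Y → ℝ)

theorem continuous_expSum : Continuous (expSum c a) := by
  unfold expSum
  fun_prop

theorem convexOn_expSum : ConvexOn ℝ univ (expSum c a) := by
  refine ⟨convex_univ, fun x _ y _ p q hp hq hpq => ?_⟩
  simp only [expSum, smul_eq_mul, Finset.mul_sum, ← Finset.sum_add_distrib]
  refine Finset.sum_le_sum fun s _ => ?_
  have hlin : ⟪p • x + q • y, c s⟫_ℝ - a s
      = p • (⟪x, c s⟫_ℝ - a s) + q • (⟪y, c s⟫_ℝ - a s) := by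
    rw [inner_add_left, real_inner_smul_left, real_inner_smul_left, smul_eq_mul, smul_eq_mul]
    linear_combination a s * hpq
  rw [hlin]
  exact convexOn_exp.2 (mem_univ _) (mem_univ _) hp hq hpq

theorem exp_le_expSum (u : E) (s : Y) : exp (⟪u, c s⟫_ℝ - a s) ≤ expSum c a u :=
  Finset.single_le_sum (f := fun s => exp (⟪u, c s⟫_ℝ - a s)) (fun _ _ => (exp_pos _).le)
    (Finset.mem_univ s)

theorem inner_le_of_expSum_le_one {u : E} (hu : expSum c a u ≤ 1) (s : Y) : ⟪u, c s⟫_ℝ ≤ a s :=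
  sub_nonpos.1 (exp_le_one_iff.1 ((exp_le_expSum c a u s).trans hu))

theorem exists_one_le_expSum_ray (u₀ v : E) {s : Y} (hs : 0 < ⟪v, c s⟫_ℝ) :
    ∃ t : ℝ, 0 ≤ t ∧ 1 ≤ expSum c a (u₀ + t • v) := by
  set t := max 0 ((a s - ⟪u₀, c s⟫_ℝ) / ⟪v, c s⟫_ℝ)
  have ht : a s - ⟪u₀, c s⟫_ℝ ≤ t * ⟪v, c s⟫_ℝ := (div_le_iff₀ hs).1 (le_max_right _ _)
  refine ⟨t, le_max_left _ _, (one_le_exp ?_).trans (exp_le_expSum c a _ s)⟩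
  rw [inner_add_left, real_inner_smul_left]
  linarith

theorem isBounded_setOf_forall_inner_le [FiniteDimensional ℝ E]
    (hc : ∀ v : E, ‖v‖ = 1 → ∃ s, 0 < ⟪v, c s⟫_ℝ) :
    Bornology.IsBounded {u : E | ∀ s, ⟪u, c s⟫_ℝ ≤ a s} := by
  obtain ⟨ε, hε, hεg⟩ := exists_pos_mul_norm_le_of_pos_on_sphere
    (g := fun u => ∑ s, max ⟪u, c s⟫_ℝ 0) (by fun_prop)
    (fun r x hr => by simp only [real_inner_smul_left, Finset.mul_sum, mul_max_of_nonneg _ _ hr,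
      mul_zero])
    (fun v hv => by
      obtain ⟨s, hs⟩ := hc v hv
      exact hs.trans_le ((le_max_left _ _).trans
        (Finset.single_le_sum (f := fun s => max ⟪v, c s⟫_ℝ 0) (fun _ _ => le_max_right _ _)
          (Finset.mem_univ s))))
  refine isBounded_iff_forall_norm_le.2 ⟨(∑ s, max (a s) 0) / ε, fun u hu => ?_⟩
  rw [le_div_iff₀ hε, mul_comm]
  exact (hεg u).trans (Finset.sum_le_sum fun s _ => max_le_max_right 0 (hu s))

end ExpSum

theorem stmt1_general (n : ℕ) (Y : Type*) [Fintype Y]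
    (F : Y → ℝ) (β : ℝ) (c : Y → EuclideanSpace ℝ (Fin n))
    (hc : ∀ v : EuclideanSpace ℝ (Fin n), ‖v‖ = 1 → ∃ s, 0 < ⟪v, c s⟫_ℝ)
    (uβ : EuclideanSpace ℝ (Fin n))
    (hmin : ∀ u, u ≠ uβ →
      ∑ s, Real.exp (⟪uβ, c s⟫_ℝ - β * F s) < ∑ s, Real.exp (⟪u, c s⟫_ℝ - β * F s))
    (hlt : ∑ s, Real.exp (⟪uβ, c s⟫_ℝ - β * F s) < 1) :
    ∃ T : EuclideanSpace ℝ (Fin n) → ℝ,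
      (∀ v, ‖v‖ = 1 → 0 < T v ∧
        (∑ s, Real.exp (⟪uβ + T v • v, c s⟫_ℝ - β * F s) = 1) ∧
        ∀ t : ℝ, 0 < t → (∑ s, Real.exp (⟪uβ + t • v, c s⟫_ℝ - β * F s) = 1) → t = T v) ∧
      ∃ H : Metric.sphere (0 : EuclideanSpace ℝ (Fin n)) 1 ≃ₜ
          {u : EuclideanSpace ℝ (Fin n) // ∑ s, Real.exp (⟪u, c s⟫_ℝ - β * F s) = 1},
        ∀ v : Metric.sphere (0 : EuclideanSpace ℝ (Fin n)) 1,
          (H v : EuclideanSpace ℝ (Fin n)) = uβ + T v • (v : EuclideanSpace ℝ (Fin n)) := by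
  let a : Y → ℝ := fun s => β * F s
  have hray : ∀ v, ‖v‖ = 1 → ∃! t : ℝ, 0 < t ∧ expSum c a (uβ + t • v) = 1 := by
    intro v hv
    obtain ⟨s, hs⟩ := hc v hv
    obtain ⟨t₁, ht₁, hle⟩ := exists_one_le_expSum_ray c a uβ v hs
    have hv0 : v ≠ 0 := ne_zero_of_norm_ne_zero (hv.symm ▸ one_ne_zero)
    refine existsUnique_pos_eq_of_strictMonoOn ((continuous_expSum c a).comp (by fun_prop))
      ((convexOn_expSum c a).strictMonoOn_ray_of_isStrictMin hmin hv0) ?_ ht₁ hle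
    rwa [zero_smul, add_zero]
  choose! T hT using hray
  have hTray : ∀ v, ‖v‖ = 1 → 0 < T v ∧ expSum c a (uβ + T v • v) = 1 ∧
      ∀ t, 0 < t → expSum c a (uβ + t • v) = 1 → t = T v := fun v hv =>
    ⟨(hT v hv).1.1, (hT v hv).1.2, fun t ht h => (hT v hv).2 t ⟨ht, h⟩⟩
  have hQ : IsCompact {u | expSum c a u = 1} :=
    Metric.isCompact_of_isClosed_isBounded (isClosed_eq (continuous_expSum c a) continuous_const)
      ((isBounded_setOf_forall_inner_le c a hc).subset
        fun u hu => inner_le_of_expSum_le_one c a (le_of_eq hu))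
  exact ⟨T, hTray, exists_homeomorph_sphere_of_existsUnique_ray hQ hlt.ne hTray⟩

theorem stmt1 (n : ℕ) (hn : 0 < n) (Y : Type*) [Fintype Y] (hY : 2 ≤ Fintype.card Y)
    (F : Y → ℝ) (β : ℝ) (c : Y → EuclideanSpace ℝ (Fin n))
    (hc : ∀ v : EuclideanSpace ℝ (Fin n), ‖v‖ = 1 → ∃ s, 0 < ⟪v, c s⟫_ℝ)
    (uβ : EuclideanSpace ℝ (Fin n))
    (hmin : ∀ u, u ≠ uβ →
      ∑ s, Real.exp (⟪uβ, c s⟫_ℝ - β * F s) < ∑ s, Real.exp (⟪u, c s⟫_ℝ - β * F s))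
    (hlt : ∑ s, Real.exp (⟪uβ, c s⟫_ℝ - β * F s) < 1) :
    ∃ T : EuclideanSpace ℝ (Fin n) → ℝ,
      (∀ v, ‖v‖ = 1 → 0 < T v ∧
        (∑ s, Real.exp (⟪uβ + T v • v, c s⟫_ℝ - β * F s) = 1) ∧
        ∀ t : ℝ, 0 < t → (∑ s, Real.exp (⟪uβ + t • v, c s⟫_ℝ - β * F s) = 1) → t = T v) ∧
      ∃ H : Metric.sphere (0 : EuclideanSpace ℝ (Fin n)) 1 ≃ₜ
          {u : EuclideanSpace ℝ (Fin n) // ∑ s, Real.exp (⟪u, c s⟫_ℝ - β * F s) = 1},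
        ∀ v : Metric.sphere (0 : EuclideanSpace ℝ (Fin n)) 1,
          (H v : EuclideanSpace ℝ (Fin n)) = uβ + T v • (v : EuclideanSpace ℝ (Fin n)) :=
  stmt1_general n Y F β c hc uβ hmin hlt
end

section
/- Let Y be a finite set, F : Y → ℝ with F(s) > 0 for all s ∈ Y, and c : Y → ℝⁿ such that for every nonzero v ∈ ℝⁿ there is s ∈ Y with v·c(s) ≥ 0. Then for each u ∈ ℝⁿ there exists a unique β(u) > 0 such that ∑_{s∈Y} exp(−β(u)F(s) + u·c(s)) = 1, and the function u ↦ β(u) is continuous on ℝⁿ. -/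
/-!
For fixed `u` the partition sum `b ↦ ∑ s, exp (-(b F s) + ⟪u, c s⟫)` is continuous and strictly
decreasing, tends to `0` as `b → ∞`, and exceeds `1` at `b = 0` because some term `exp ⟪u, c s⟫`
is at least `1` and there is a second positive term. The intermediate value theorem gives a unique
root `β(u) > 0` of the equation `= 1`. Continuity of `β` follows from monotonicity alone: if
`a < β(u₀)` then the sum at `(u₀, a)` exceeds `1`, hence so does the sum at `(u, a)` for `u` near
`u₀`, which forces `a < β(u)`; symmetrically from above.
-/

open Real Filter Topology
open scoped InnerProductSpace BigOperators

section ImplicitRoot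

variable {X α β : Type*} [TopologicalSpace X] [LinearOrder α] [TopologicalSpace α]
  [OrderTopology α] [LinearOrder β] [TopologicalSpace β] [OrderClosedTopology β]

theorem continuous_of_strictAnti_of_apply_eq {g : X → α → β} {B : X → α} {k : β}
    (hanti : ∀ x, StrictAnti (g x)) (hcont : ∀ a, Continuous fun x => g x a)
    (hB : ∀ x, g x (B x) = k) : Continuous B := by
  refine continuous_iff_continuousAt.2 fun x₀ => tendsto_order.2 ⟨fun a ha => ?_, fun a ha => ?_⟩
  · have hk : k < g x₀ a := hB x₀ ▸ hanti x₀ ha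
    filter_upwards [(hcont a).continuousAt.eventually_const_lt hk] with x hx
    exact (hanti x).lt_iff_gt.1 (hB x ▸ hx)
  · have hk : g x₀ a < k := hB x₀ ▸ hanti x₀ ha
    filter_upwards [(hcont a).continuousAt.eventually_lt_const hk] with x hx
    exact (hanti x).lt_iff_gt.1 (hB x ▸ hx)

end ImplicitRoot

theorem existsUnique_pos_eq_of_strictAnti {g : ℝ → ℝ} {k l : ℝ} (hanti : StrictAnti g)
    (hcont : Continuous g) (h0 : k < g 0) (hlim : Tendsto g atTop (𝓝 l)) (hl : l < k) :
    ∃! b, 0 < b ∧ g b = k := by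
  obtain ⟨M, hM0, hM⟩ : ∃ M, 0 < M ∧ g M < k :=
    ((eventually_gt_atTop 0).and (hlim.eventually (eventually_lt_nhds hl))).exists
  obtain ⟨b, hb, hbk⟩ :=
    intermediate_value_Icc' hM0.le hcont.continuousOn ⟨hM.le, h0.le⟩
  have hb0 : 0 < b := hb.1.lt_of_ne (by rintro rfl; exact h0.ne' hbk)
  exact ⟨b, ⟨hb0, hbk⟩, fun b' hb' => hanti.injective (hb'.2.trans hbk.symm)⟩

theorem one_lt_sum_exp {Y : Type*} [Fintype Y] (hY : 2 ≤ Fintype.card Y) (f : Y → ℝ)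
    (hf : ∃ s, 0 ≤ f s) : 1 < ∑ s, exp (f s) := by
  classical
  obtain ⟨s₀, hs₀⟩ := hf
  have hrest : 0 < ∑ s ∈ Finset.univ.erase s₀, exp (f s) := by
    refine Finset.sum_pos (fun s _ => exp_pos _) ?_
    rw [← Finset.card_pos, Finset.card_erase_of_mem (Finset.mem_univ s₀), Finset.card_univ]
    omega
  rw [← Finset.add_sum_erase _ _ (Finset.mem_univ s₀)]
  linarith [one_le_exp hs₀]

section PartitionSum

variable {Y E : Type*} [Fintype Y] [NormedAddCommGroup E] [InnerProductSpace ℝ E]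

noncomputable def partitionSum (F : Y → ℝ) (c : Y → E) (u : E) (b : ℝ) : ℝ :=
  ∑ s, exp (-(b * F s) + ⟪u, c s⟫_ℝ)

variable {F : Y → ℝ} {c : Y → E}

theorem partitionSum_strictAnti [Nonempty Y] (hF : ∀ s, 0 < F s) (u : E) :
    StrictAnti (partitionSum F c u) := fun b₁ b₂ hb =>
  Finset.sum_lt_sum_of_nonempty Finset.univ_nonempty fun s _ =>
    exp_lt_exp.2 (by nlinarith [hF s])

theorem continuous_partitionSum_left (b : ℝ) :
    Continuous fun u => partitionSum F c u b := by
  unfold partitionSum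
  fun_prop

theorem continuous_partitionSum_right (u : E) : Continuous (partitionSum F c u) := by
  unfold partitionSum
  fun_prop

theorem tendsto_partitionSum_atTop (hF : ∀ s, 0 < F s) (u : E) :
    Tendsto (partitionSum F c u) atTop (𝓝 0) := by
  unfold partitionSum
  simpa using tendsto_finsetSum Finset.univ fun s _ =>
    tendsto_exp_atBot.comp <| tendsto_atBot_add_const_right _ _ <|
      tendsto_neg_atTop_atBot.comp (tendsto_id.atTop_mul_const (hF s))

theorem partitionSum_zero (u : E) : partitionSum F c u 0 = ∑ s, exp ⟪u, c s⟫_ℝ := by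
  simp [partitionSum]

end PartitionSum

theorem stmt2_general (n : ℕ) (Y : Type*) [Fintype Y] (hY : 2 ≤ Fintype.card Y)
    (F : Y → ℝ) (hF : ∀ s, 0 < F s) (c : Y → EuclideanSpace ℝ (Fin n))
    (hc : ∀ v : EuclideanSpace ℝ (Fin n), v ≠ 0 → ∃ s, 0 ≤ ⟪v, c s⟫_ℝ) :
    (∀ u : EuclideanSpace ℝ (Fin n),
      ∃! b : ℝ, 0 < b ∧ ∑ s, Real.exp (-(b * F s) + ⟪u, c s⟫_ℝ) = 1) ∧
    ∀ B : EuclideanSpace ℝ (Fin n) → ℝ,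
      (∀ u, 0 < B u ∧ ∑ s, Real.exp (-(B u * F s) + ⟪u, c s⟫_ℝ) = 1) → Continuous B := by
  have : Nonempty Y := Fintype.card_pos_iff.1 (by omega)
  refine ⟨fun u => ?_, fun B hB => ?_⟩
  · have hu : ∃ s, 0 ≤ ⟪u, c s⟫_ℝ := by
      by_cases h : u = 0
      · exact ⟨Classical.arbitrary Y, by simp [h]⟩
      · exact hc u h
    have h0 : 1 < partitionSum F c u 0 := by
      rw [partitionSum_zero]
      exact one_lt_sum_exp hY _ hu
    exact existsUnique_pos_eq_of_strictAnti (partitionSum_strictAnti hF u)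
      (continuous_partitionSum_right u) h0 (tendsto_partitionSum_atTop hF u) one_pos
  · exact continuous_of_strictAnti_of_apply_eq (partitionSum_strictAnti hF)
      continuous_partitionSum_left fun u => (hB u).2

theorem stmt2 (n : ℕ) (hn : 0 < n) (Y : Type*) [Fintype Y] (hY : 2 ≤ Fintype.card Y)
    (F : Y → ℝ) (hF : ∀ s, 0 < F s) (c : Y → EuclideanSpace ℝ (Fin n))
    (hc : ∀ v : EuclideanSpace ℝ (Fin n), v ≠ 0 → ∃ s, 0 ≤ ⟪v, c s⟫_ℝ) :
    (∀ u : EuclideanSpace ℝ (Fin n),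
      ∃! b : ℝ, 0 < b ∧ ∑ s, Real.exp (-(b * F s) + ⟪u, c s⟫_ℝ) = 1) ∧
    ∀ B : EuclideanSpace ℝ (Fin n) → ℝ,
      (∀ u, 0 < B u ∧ ∑ s, Real.exp (-(B u * F s) + ⟪u, c s⟫_ℝ) = 1) → Continuous B :=
  stmt2_general n Y hY F hF c hc
end

section
/- Let Y be a finite set, F : Y → ℝ, β ∈ ℝ, and suppose t, t' ∈ Δ_Y (probability vectors on Y) satisfy: there exist y, y' ∈ Y with t_y ≠ 0, t'_{y'} ≠ 0, and t_s^{1/F(s)} / t_y^{1/F(y)} = t'_s^{1/F(s)} / t'_{y'}^{1/F(y')} for all s ∈ Y, where F(s) > 0 for all s. Then t = t'. -/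
open Real
open scoped BigOperators

/-! Raising the hypothesis to the powers `F s` gives `t s = r ^ F s * t' s` for the single constant
`r = t y ^ (1 / F y) / t' y' ^ (1 / F y')`. Summing over `Y`, both sides have total mass `1`, and
`x ↦ ∑ s, x ^ F s * t' s` is strictly increasing on `[0, ∞)`, so `r = 1`. -/

theorem strictMonoOn_sum_rpow_mul {ι : Type*} {s : Finset ι} {F a : ι → ℝ}
    (hF : ∀ i ∈ s, 0 < F i) (ha : ∀ i ∈ s, 0 ≤ a i) {j : ι} (hj : j ∈ s) (haj : 0 < a j) :
    StrictMonoOn (fun x => ∑ i ∈ s, x ^ F i * a i) (Set.Ici 0) := by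
  intro x hx z _ hxz
  refine Finset.sum_lt_sum (fun i hi => ?_) ⟨j, hj, ?_⟩
  · exact mul_le_mul_of_nonneg_right (rpow_le_rpow hx hxz.le (hF i hi).le) (ha i hi)
  · exact mul_lt_mul_of_pos_right (rpow_lt_rpow hx hxz (hF j hj)) haj

theorem eq_rpow_mul_of_rpow_one_div_eq_mul {a b c p : ℝ} (ha : 0 ≤ a) (hb : 0 ≤ b) (hc : 0 ≤ c)
    (hp : p ≠ 0) (h : a ^ (1 / p) = c * b ^ (1 / p)) : a = c ^ p * b := by
  rw [one_div] at h
  calc a = (a ^ p⁻¹) ^ p := (rpow_inv_rpow ha hp).symm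
    _ = (c * b ^ p⁻¹) ^ p := by rw [h]
    _ = c ^ p * (b ^ p⁻¹) ^ p := mul_rpow hc (rpow_nonneg hb _)
    _ = c ^ p * b := by rw [rpow_inv_rpow hb hp]

theorem stmt6_general (Y : Type*) [Fintype Y] (F : Y → ℝ) (hF : ∀ s, 0 < F s)
    (t t' : Y → ℝ)
    (ht0 : ∀ s, 0 ≤ t s ∧ t s ≤ 1) (ht1 : ∑ s, t s = 1)
    (ht'0 : ∀ s, 0 ≤ t' s ∧ t' s ≤ 1) (ht'1 : ∑ s, t' s = 1)
    (y y' : Y) (hy : t y ≠ 0) (hy' : t' y' ≠ 0)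
    (h : ∀ s, t s ^ (1 / F s) / t y ^ (1 / F y) = t' s ^ (1 / F s) / t' y' ^ (1 / F y')) :
    t = t' := by
  have hty' : 0 < t' y' := (ht'0 y').1.lt_of_ne' hy'
  have hA : 0 < t y ^ (1 / F y) := rpow_pos_of_pos ((ht0 y).1.lt_of_ne' hy) _
  have hB : 0 < t' y' ^ (1 / F y') := rpow_pos_of_pos hty' _
  set r := t y ^ (1 / F y) / t' y' ^ (1 / F y')
  have hr : 0 ≤ r := (div_pos hA hB).le
  have hscale : ∀ s, t s = r ^ F s * t' s := fun s =>
    eq_rpow_mul_of_rpow_one_div_eq_mul (ht0 s).1 (ht'0 s).1 hr (hF s).ne' <| by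
      rw [div_mul_eq_mul_div, eq_div_iff hB.ne']
      linear_combination (div_eq_div_iff hA.ne' hB.ne').mp (h s)
  have hr1 : r = 1 := by
    refine (strictMonoOn_sum_rpow_mul (fun s _ => hF s) (fun s _ => (ht'0 s).1)
      (Finset.mem_univ y') hty').injOn hr (Set.mem_Ici.mpr zero_le_one) ?_
    simp only [one_rpow, one_mul, ← hscale, ht1, ht'1]
  funext s
  rw [hscale s, hr1, one_rpow, one_mul]

theorem stmt6 (Y : Type*) [Fintype Y] (F : Y → ℝ) (hF : ∀ s, 0 < F s) (β : ℝ)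
    (t t' : Y → ℝ)
    (ht0 : ∀ s, 0 ≤ t s ∧ t s ≤ 1) (ht1 : ∑ s, t s = 1)
    (ht'0 : ∀ s, 0 ≤ t' s ∧ t' s ≤ 1) (ht'1 : ∑ s, t' s = 1)
    (y y' : Y) (hy : t y ≠ 0) (hy' : t' y' ≠ 0)
    (h : ∀ s, t s ^ (1 / F s) / t y ^ (1 / F y) = t' s ^ (1 / F s) / t' y' ^ (1 / F y')) :
    t = t' :=
  stmt6_general Y F hF t t' ht0 ht1 ht'0 ht'1 y y' hy hy' h
end

section
/- Let Z ⊆ Y be nonempty, F : Y → ℝ strictly positive, and suppose t ∈ Δ_Y satisfies: t_s ≠ 0 if and only if s ∈ Z, and t_{s₁}^{1/F(s₁)} = t_{s₂}^{1/F(s₂)} for all s₁, s₂ ∈ Z. Then t is the unique element of Δ_Y with these two properties; in particular for any z ∈ Z, t_z is the unique positive solution of ∑_{s∈Z} x^{F(s)/F(z)} = 1. -/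
open Real

/-! Equal normalised powers make every coordinate on `Z` a power of any one of them,
`t_s = t_z ^ (F s / F z)`, so `∑ t = 1` becomes an equation for `t_z` whose left side is strictly
increasing in `t_z`; hence `t_z`, and with it all of `t`, is determined. -/

lemma Real.eq_rpow_div_of_rpow_one_div_eq {a b p q : ℝ} (ha : 0 ≤ a) (hb : 0 ≤ b) (hp : p ≠ 0)
    (h : a ^ (1 / p) = b ^ (1 / q)) : a = b ^ (p / q) :=
  calc a = (a ^ (1 / p)) ^ p := by rw [← rpow_mul ha, one_div_mul_cancel hp, rpow_one]
    _ = (b ^ (1 / q)) ^ p := by rw [h]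
    _ = b ^ (p / q) := by rw [← rpow_mul hb, one_div_mul_eq_div]

lemma Real.strictMonoOn_sum_rpow {ι : Type*} {s : Finset ι} (hs : s.Nonempty) {e : ι → ℝ}
    (he : ∀ i ∈ s, 0 < e i) : StrictMonoOn (fun x : ℝ ↦ ∑ i ∈ s, x ^ e i) (Set.Ici 0) :=
  fun _ hx _ _ hxy ↦ Finset.sum_lt_sum_of_nonempty hs fun i hi ↦ rpow_lt_rpow hx hxy (he i hi)

section EqualPowers

variable {Y : Type*} {F : Y → ℝ} {Z : Finset Y} {t : Y → ℝ}

lemma pos_of_mem_of_support (ht0 : ∀ s, 0 ≤ t s) (h1 : ∀ s, t s ≠ 0 ↔ s ∈ Z) {z : Y}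
    (hz : z ∈ Z) : 0 < t z :=
  (ht0 z).lt_of_ne' ((h1 z).2 hz)

lemma eq_rpow_div_of_rpow_one_div_eq (hF : ∀ s, 0 < F s) (ht0 : ∀ s, 0 ≤ t s)
    (h2 : ∀ s₁ ∈ Z, ∀ s₂ ∈ Z, t s₁ ^ (1 / F s₁) = t s₂ ^ (1 / F s₂))
    {s z : Y} (hs : s ∈ Z) (hz : z ∈ Z) : t s = t z ^ (F s / F z) :=
  Real.eq_rpow_div_of_rpow_one_div_eq (ht0 s) (ht0 z) (hF s).ne' (h2 s hs z hz)

lemma sum_rpow_div_eq_one [Fintype Y] (hF : ∀ s, 0 < F s) (ht0 : ∀ s, 0 ≤ t s)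
    (ht1 : ∑ s, t s = 1) (h1 : ∀ s, t s ≠ 0 ↔ s ∈ Z)
    (h2 : ∀ s₁ ∈ Z, ∀ s₂ ∈ Z, t s₁ ^ (1 / F s₁) = t s₂ ^ (1 / F s₂))
    {z : Y} (hz : z ∈ Z) : ∑ s ∈ Z, t z ^ (F s / F z) = 1 :=
  calc ∑ s ∈ Z, t z ^ (F s / F z) = ∑ s ∈ Z, t s :=
        Finset.sum_congr rfl fun _ hs ↦ (eq_rpow_div_of_rpow_one_div_eq hF ht0 h2 hs hz).symm
    _ = ∑ s, t s :=
        Finset.sum_subset (Finset.subset_univ Z) fun s _ hs ↦ not_ne_iff.1 (mt (h1 s).1 hs)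
    _ = 1 := ht1

end EqualPowers

theorem stmt7_general (Y : Type*) [Fintype Y]
    (F : Y → ℝ) (hF : ∀ s, 0 < F s) (Z : Finset Y) (hZ : Z.Nonempty)
    (t : Y → ℝ) (ht0 : ∀ s, 0 ≤ t s ∧ t s ≤ 1) (ht1 : ∑ s, t s = 1)
    (h1 : ∀ s, t s ≠ 0 ↔ s ∈ Z)
    (h2 : ∀ s₁ ∈ Z, ∀ s₂ ∈ Z, t s₁ ^ (1 / F s₁) = t s₂ ^ (1 / F s₂)) :
    (∀ t' : Y → ℝ, (∀ s, 0 ≤ t' s ∧ t' s ≤ 1) → (∑ s, t' s = 1) →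
      (∀ s, t' s ≠ 0 ↔ s ∈ Z) →
      (∀ s₁ ∈ Z, ∀ s₂ ∈ Z, t' s₁ ^ (1 / F s₁) = t' s₂ ^ (1 / F s₂)) → t' = t) ∧
    ∀ z ∈ Z, 0 < t z ∧ (∑ s ∈ Z, t z ^ (F s / F z) = 1) ∧
      ∀ x : ℝ, 0 < x → (∑ s ∈ Z, x ^ (F s / F z) = 1) → x = t z := by
  have ht0 : ∀ s, 0 ≤ t s := fun s ↦ (ht0 s).1
  have hinj (z : Y) : Set.InjOn (fun x : ℝ ↦ ∑ s ∈ Z, x ^ (F s / F z)) (Set.Ici 0) :=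
    (Real.strictMonoOn_sum_rpow hZ fun s _ ↦ div_pos (hF s) (hF z)).injOn
  have hsum {z : Y} (hz : z ∈ Z) := sum_rpow_div_eq_one hF ht0 ht1 h1 h2 hz
  refine ⟨fun t' ht0' ht1' h1' h2' ↦ ?_, fun z hz ↦ ?_⟩
  · have ht0' : ∀ s, 0 ≤ t' s := fun s ↦ (ht0' s).1
    obtain ⟨z, hz⟩ := hZ
    have htz : t' z = t z := hinj z (ht0' z) (ht0 z)
      ((sum_rpow_div_eq_one hF ht0' ht1' h1' h2' hz).trans (hsum hz).symm)
    funext s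
    by_cases hs : s ∈ Z
    · rw [eq_rpow_div_of_rpow_one_div_eq hF ht0 h2 hs hz,
        eq_rpow_div_of_rpow_one_div_eq hF ht0' h2' hs hz, htz]
    · rw [not_ne_iff.1 (mt (h1' s).1 hs), not_ne_iff.1 (mt (h1 s).1 hs)]
  · exact ⟨pos_of_mem_of_support ht0 h1 hz, hsum hz,
      fun x hx hxs ↦ hinj z hx.le (ht0 z) (hxs.trans (hsum hz).symm)⟩

theorem stmt7 (Y : Type*) [Fintype Y] [DecidableEq Y] (hY : 2 ≤ Fintype.card Y)
    (F : Y → ℝ) (hF : ∀ s, 0 < F s) (Z : Finset Y) (hZ : Z.Nonempty)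
    (t : Y → ℝ) (ht0 : ∀ s, 0 ≤ t s ∧ t s ≤ 1) (ht1 : ∑ s, t s = 1)
    (h1 : ∀ s, t s ≠ 0 ↔ s ∈ Z)
    (h2 : ∀ s₁ ∈ Z, ∀ s₂ ∈ Z, t s₁ ^ (1 / F s₁) = t s₂ ^ (1 / F s₂)) :
    (∀ t' : Y → ℝ, (∀ s, 0 ≤ t' s ∧ t' s ≤ 1) → (∑ s, t' s = 1) →
      (∀ s, t' s ≠ 0 ↔ s ∈ Z) →
      (∀ s₁ ∈ Z, ∀ s₂ ∈ Z, t' s₁ ^ (1 / F s₁) = t' s₂ ^ (1 / F s₂)) → t' = t) ∧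
    ∀ z ∈ Z, 0 < t z ∧ (∑ s ∈ Z, t z ^ (F s / F z) = 1) ∧
      ∀ x : ℝ, 0 < x → (∑ s ∈ Z, x ^ (F s / F z) = 1) → x = t z :=
  stmt7_general Y F hF Z hZ t ht0 ht1 h1 h2
end

section
/- Let M ⊆ ℝⁿ be a closed strongly convex cone (i.e. M ∩ (−M) = {0}), and fix v ∈ Int(M) ∩ S^{n−1} where Int is the relative interior and dim(M) ≥ 2. Then for every w ∈ (M ∩ S^{n−1}) \ {v} there exists a unique pair (λ, u) with λ ∈ (0,1] and u in the relative boundary of M intersected with S^{n−1} such that w = ((1−λ)v + λu)/‖(1−λ)v + λu‖. -/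
open Real
open scoped BigOperators

/-!
Walk from `w` in the direction `-v`. The parameters `s ≥ 0` with `w - s • v ∈ M` form a closed
interval `[0, s₀]`, bounded because otherwise `-v ∈ M` would be a limit of rescaled points of `M`.
The exit point `w - s₀ • v` is the only point of the ray on the relative boundary: any earlier
point is `(w - s₀ • v) + (positive) • v`, which lies in the relative interior because `v` does,
while at `s₀` a relatively interior point could be pushed further along `-v`. Writing
`w ∝ (1 - λ) • v + λ • u` as `u ∝ w - (λ⁻¹ - 1) • v` turns existence and uniqueness of `(λ, u)`
into existence and uniqueness of this exit point.
-/

open Set Filter Topology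

theorem mem_intrinsicInterior_iff_exists_ball {𝕜 V P : Type*} [Ring 𝕜] [AddCommGroup V]
    [Module 𝕜 V] [PseudoMetricSpace P] [AddTorsor V P] {s : Set P} {x : P} :
    x ∈ intrinsicInterior 𝕜 s ↔
      x ∈ affineSpan 𝕜 s ∧ ∃ ε > 0, Metric.ball x ε ∩ affineSpan 𝕜 s ⊆ s := by
  constructor
  · rintro ⟨y, hy, rfl⟩
    obtain ⟨ε, hε, hball⟩ := Metric.mem_nhds_iff.mp (mem_interior_iff_mem_nhds.mp hy)
    exact ⟨y.2, ε, hε, fun z ⟨hz, hzA⟩ =>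
      hball (a := ⟨z, hzA⟩) (by simpa [Subtype.dist_eq] using hz)⟩
  · rintro ⟨hxA, ε, hε, hball⟩
    refine ⟨⟨x, hxA⟩, mem_interior_iff_mem_nhds.mpr (Metric.mem_nhds_iff.mpr ⟨ε, hε, ?_⟩), rfl⟩
    exact fun z hz => hball ⟨by simpa [Subtype.dist_eq] using hz, z.2⟩

theorem coe_affineSpan_of_zero_mem {𝕜 V : Type*} [Ring 𝕜] [AddCommGroup V] [Module 𝕜 V]
    {s : Set V} (h0 : 0 ∈ s) : (affineSpan 𝕜 s : Set V) = Submodule.span 𝕜 s := by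
  rw [← affineSpan_insert_zero, insert_eq_of_mem h0]

section Cone

variable {E : Type*} [NormedAddCommGroup E] [NormedSpace ℝ E] {M : Set E}

theorem mem_intrinsicInterior_iff_of_zero_mem (h0 : (0 : E) ∈ M) {x : E} :
    x ∈ intrinsicInterior ℝ M ↔
      x ∈ Submodule.span ℝ M ∧ ∃ ε > 0, Metric.ball x ε ∩ Submodule.span ℝ M ⊆ M := by
  rw [mem_intrinsicInterior_iff_exists_ball, ← SetLike.mem_coe, coe_affineSpan_of_zero_mem h0]
  rfl

theorem add_mem_of_convex_of_smul_mem (hconv : Convex ℝ M)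
    (hcone : ∀ x ∈ M, ∀ r : ℝ, 0 ≤ r → r • x ∈ M) {a b : E} (ha : a ∈ M) (hb : b ∈ M) :
    a + b ∈ M := by
  have hmid : (1 / 2 : ℝ) • a + (1 / 2 : ℝ) • b ∈ M :=
    hconv ha hb (by norm_num) (by norm_num) (by norm_num)
  convert hcone _ hmid 2 (by norm_num) using 1
  module

theorem add_smul_mem_intrinsicInterior (hconv : Convex ℝ M)
    (hcone : ∀ x ∈ M, ∀ r : ℝ, 0 ≤ r → r • x ∈ M) {m v : E} (hm : m ∈ M)
    (hv : v ∈ intrinsicInterior ℝ M) {r : ℝ} (hr : 0 < r) :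
    m + r • v ∈ intrinsicInterior ℝ M := by
  have h0 : (0 : E) ∈ M := by simpa using hcone m hm 0 le_rfl
  rw [mem_intrinsicInterior_iff_of_zero_mem h0] at hv ⊢
  obtain ⟨hvS, ε, hε, hball⟩ := hv
  have hmS : m ∈ Submodule.span ℝ M := Submodule.subset_span hm
  refine ⟨add_mem hmS (Submodule.smul_mem _ r hvS), r * ε, mul_pos hr hε, ?_⟩
  rintro z ⟨hz, hzS⟩
  set v' := r⁻¹ • (z - m)
  have hv'M : v' ∈ M := by
    refine hball ⟨?_, Submodule.smul_mem _ _ (sub_mem hzS hmS)⟩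
    rw [Metric.mem_ball, dist_eq_norm] at hz ⊢
    have : v' - v = r⁻¹ • (z - (m + r • v)) := by
      simp only [v', smul_sub, smul_add, smul_smul, inv_mul_cancel₀ hr.ne', one_smul]
      abel
    rw [this, norm_smul, Real.norm_of_nonneg (inv_nonneg.mpr hr.le), inv_mul_lt_iff₀ hr]
    exact hz
  have hz : z = m + r • v' := by
    simp only [v', smul_smul, mul_inv_cancel₀ hr.ne', one_smul, add_sub_cancel]
  rw [hz]
  exact add_mem_of_convex_of_smul_mem hconv hcone hm (hcone _ hv'M r hr.le)

theorem exists_sub_smul_mem_of_mem_intrinsicInterior (h0 : (0 : E) ∈ M) {u v : E}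
    (hu : u ∈ intrinsicInterior ℝ M) (hv : v ∈ M) : ∃ δ : ℝ, 0 < δ ∧ u - δ • v ∈ M := by
  rw [mem_intrinsicInterior_iff_of_zero_mem h0] at hu
  obtain ⟨huS, ε, hε, hball⟩ := hu
  refine ⟨ε / (‖v‖ + 1), by positivity, hball ⟨?_, ?_⟩⟩
  · rw [Metric.mem_ball, dist_eq_norm, sub_sub_cancel_left, norm_neg, norm_smul,
      Real.norm_of_nonneg (by positivity), div_mul_eq_mul_div, div_lt_iff₀ (by positivity)]
    nlinarith
  · exact sub_mem huS (Submodule.smul_mem _ _ (Submodule.subset_span hv))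

theorem smul_sub_smul_mem_iff (hcone : ∀ x ∈ M, ∀ r : ℝ, 0 ≤ r → r • x ∈ M) {a b : ℝ}
    (ha : 0 < a) {w v : E} : a • w - b • v ∈ M ↔ w - (b / a) • v ∈ M := by
  have h : a • w - b • v = a • (w - (b / a) • v) := by
    rw [smul_sub, smul_smul, mul_div_cancel₀ _ ha.ne']
  refine ⟨fun hM => ?_, fun hM => h ▸ hcone _ hM a ha.le⟩
  simpa [h, smul_smul, inv_mul_cancel₀ ha.ne'] using hcone _ hM a⁻¹ (inv_nonneg.mpr ha.le)

theorem neg_mem_of_not_bddAbove (hclosed : IsClosed M)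
    (hcone : ∀ x ∈ M, ∀ r : ℝ, 0 ≤ r → r • x ∈ M) {w v : E}
    (h : ¬BddAbove {s : ℝ | 0 ≤ s ∧ w - s • v ∈ M}) : -v ∈ M := by
  have hfreq : ∃ᶠ s : ℝ in atTop, s⁻¹ • w - v ∈ M := by
    refine frequently_atTop.mpr fun a => ?_
    obtain ⟨s, ⟨hs0, hsM⟩, has⟩ := not_bddAbove_iff.mp h (max a 1)
    have hs : 0 < s := by linarith [le_max_right a 1]
    refine ⟨s, (le_max_left a 1).trans has.le, ?_⟩
    simpa [smul_sub, smul_smul, inv_mul_cancel₀ hs.ne'] using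
      hcone _ hsM s⁻¹ (inv_nonneg.mpr hs.le)
  have hlim : Tendsto (fun s : ℝ => s⁻¹ • w - v) atTop (𝓝 (-v)) := by
    simpa using ((tendsto_inv_atTop_zero (𝕜 := ℝ)).smul_const w).sub_const v
  exact hclosed.mem_of_frequently_of_tendsto hfreq hlim

theorem exists_isGreatest_sub_smul_mem (hclosed : IsClosed M)
    (hcone : ∀ x ∈ M, ∀ r : ℝ, 0 ≤ r → r • x ∈ M) {w v : E} (hw : w ∈ M) (hv : -v ∉ M) :
    ∃ s₀ : ℝ, IsGreatest {s : ℝ | 0 ≤ s ∧ w - s • v ∈ M} s₀ := by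
  have hclosed' : IsClosed {s : ℝ | 0 ≤ s ∧ w - s • v ∈ M} :=
    isClosed_Ici.inter (hclosed.preimage (by fun_prop))
  exact ⟨_, hclosed'.isGreatest_csSup ⟨0, le_rfl, by simpa using hw⟩
    (not_not.mp (mt (neg_mem_of_not_bddAbove hclosed hcone) hv))⟩

theorem smul_sub_smul_mem_diff_intrinsicInterior_iff (hconv : Convex ℝ M)
    (hcone : ∀ x ∈ M, ∀ r : ℝ, 0 ≤ r → r • x ∈ M) {w v : E} {s₀ : ℝ}
    (hs₀ : IsGreatest {s : ℝ | 0 ≤ s ∧ w - s • v ∈ M} s₀) (hv : v ∈ intrinsicInterior ℝ M)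
    {a b : ℝ} (ha : 0 < a) (hb : 0 ≤ b) :
    a • w - b • v ∈ M \ intrinsicInterior ℝ M ↔ b = a * s₀ := by
  have hvM : v ∈ M := intrinsicInterior_subset hv
  have hs₀M : a • (w - s₀ • v) ∈ M := hcone _ hs₀.1.2 a ha.le
  constructor
  · rintro ⟨hM, hbd⟩
    have hle : b / a ≤ s₀ :=
      hs₀.2 ⟨div_nonneg hb ha.le, (smul_sub_smul_mem_iff hcone ha).mp hM⟩
    refine le_antisymm ((div_le_iff₀' ha).mp hle) (not_lt.mp fun hlt => hbd ?_)
    have h : a • w - b • v = a • (w - s₀ • v) + (a * s₀ - b) • v := by module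
    exact h ▸ add_smul_mem_intrinsicInterior hconv hcone hs₀M hv (sub_pos.mpr hlt)
  · rintro rfl
    have h : a • w - (a * s₀) • v = a • (w - s₀ • v) := by module
    refine ⟨h ▸ hs₀M, fun hint => ?_⟩
    have h0 : (0 : E) ∈ M := by simpa using hcone v hvM 0 le_rfl
    obtain ⟨δ, hδ, hδM⟩ := exists_sub_smul_mem_of_mem_intrinsicInterior h0 hint hvM
    have hmem : a • w - (a * s₀ + δ) • v ∈ M := by rwa [add_smul, ← sub_sub]
    have hle := hs₀.2 ⟨by positivity, (smul_sub_smul_mem_iff hcone ha).mp hmem⟩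
    rw [add_div, mul_div_cancel_left₀ _ ha.ne'] at hle
    linarith [div_pos hδ ha]

end Cone

theorem eq_inv_norm_smul_combo_iff {E : Type*} [NormedAddCommGroup E] [NormedSpace ℝ E]
    {v w q : E} (hw : ‖w‖ = 1) {l : ℝ} (hl : 0 < l) :
    w = ‖(1 - l) • v + l • q‖⁻¹ • ((1 - l) • v + l • q) ↔
      ∃ a : ℝ, 0 < a ∧ q = a • w - (l⁻¹ - 1) • v := by
  constructor
  · intro h
    set x := (1 - l) • v + l • q
    have hx : 0 < ‖x‖ := by
      refine norm_pos_iff.mpr fun hx0 => ?_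
      rw [hx0, smul_zero] at h
      simp [h] at hw
    have hlq : l • q = ‖x‖ • w - (1 - l) • v := by
      rw [h, smul_smul, mul_inv_cancel₀ hx.ne', one_smul]
      simp only [x]
      abel
    refine ⟨‖x‖ / l, div_pos hx hl, ?_⟩
    calc q = l⁻¹ • (l • q) := by rw [smul_smul, inv_mul_cancel₀ hl.ne', one_smul]
      _ = _ := by rw [hlq]; match_scalars <;> field_simp
  · rintro ⟨a, ha, rfl⟩
    have hx : (1 - l) • v + l • (a • w - (l⁻¹ - 1) • v) = (l * a) • w := by
      match_scalars <;> field_simp; ring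
    rw [hx, norm_smul, hw, mul_one, Real.norm_of_nonneg (by positivity), smul_smul,
      inv_mul_cancel₀ (by positivity), one_smul]

theorem stmt8_general (n : ℕ) (M : Set (EuclideanSpace ℝ (Fin n)))
    (hclosed : IsClosed M) (hconv : Convex ℝ M)
    (hcone : ∀ x ∈ M, ∀ r : ℝ, 0 ≤ r → r • x ∈ M)
    (hstrong : M ∩ (-M) = {0})
    (v : EuclideanSpace ℝ (Fin n)) (hv : v ∈ intrinsicInterior ℝ M) (hv1 : ‖v‖ = 1) :
    ∀ w ∈ M, ‖w‖ = 1 → w ≠ v →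
      ∃! p : ℝ × EuclideanSpace ℝ (Fin n),
        p.1 ∈ Set.Ioc (0 : ℝ) 1 ∧ p.2 ∈ M \ intrinsicInterior ℝ M ∧ ‖p.2‖ = 1 ∧
        w = ‖(1 - p.1) • v + p.1 • p.2‖⁻¹ • ((1 - p.1) • v + p.1 • p.2) := by
  intro w hw hw1 hwv
  have hnegv : -v ∉ M := fun h => by
    have hv0 : v ∈ M ∩ -M := ⟨intrinsicInterior_subset hv, by simpa using h⟩
    rw [hstrong, mem_singleton_iff] at hv0
    simp [hv0] at hv1
  obtain ⟨s₀, hs₀⟩ := exists_isGreatest_sub_smul_mem hclosed hcone hw hnegv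
  have hboundary {a b : ℝ} :=
    smul_sub_smul_mem_diff_intrinsicInterior_iff (a := a) (b := b) hconv hcone hs₀ hv
  set N := ‖w - s₀ • v‖
  have hN : 0 < N := by
    refine norm_pos_iff.mpr fun h => hwv ?_
    have hws : w = s₀ • v := sub_eq_zero.mp h
    have hs₀1 : s₀ = 1 := by simpa [hws, norm_smul, hv1, abs_of_nonneg hs₀.1.1] using hw1
    rw [hws, hs₀1, one_smul]
  have hs₀N : 1 ≤ 1 + s₀ / N := le_add_of_nonneg_right (div_nonneg hs₀.1.1 hN.le)
  have hl₀ : 0 < (1 + s₀ / N)⁻¹ := inv_pos.mpr (by linarith)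
  refine ⟨((1 + s₀ / N)⁻¹, N⁻¹ • (w - s₀ • v)),
    ⟨⟨hl₀, inv_le_one_of_one_le₀ hs₀N⟩, ?_, ?_, ?_⟩, ?_⟩
  · rw [smul_sub, smul_smul]
    exact (hboundary (inv_pos.mpr hN) (mul_nonneg (inv_nonneg.mpr hN.le) hs₀.1.1)).mpr rfl
  · rw [norm_smul, norm_inv, norm_norm, inv_mul_cancel₀ hN.ne']
  · refine (eq_inv_norm_smul_combo_iff hw1 hl₀).mpr ⟨N⁻¹, inv_pos.mpr hN, ?_⟩
    rw [inv_inv, add_sub_cancel_left, smul_sub, smul_smul, div_eq_inv_mul]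
  · rintro ⟨l, q⟩ ⟨⟨hl0, hl1⟩, hq, hq1, hwq⟩
    dsimp only at hl0 hl1 hq hq1 hwq
    obtain ⟨a, ha, rfl⟩ := (eq_inv_norm_smul_combo_iff hw1 hl0).mp hwq
    have hb : l⁻¹ - 1 = a * s₀ :=
      (hboundary ha (sub_nonneg.mpr (one_le_inv₀ hl0 |>.mpr hl1))).mp hq
    have hq' : a • w - (l⁻¹ - 1) • v = a • (w - s₀ • v) := by rw [hb, smul_sub, smul_smul]
    have haN : a = N⁻¹ := by
      rw [hq', norm_smul, Real.norm_of_nonneg ha.le] at hq1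
      exact eq_inv_of_mul_eq_one_left hq1
    have hl : l = (1 + s₀ / N)⁻¹ := by
      rw [← inv_inv l, ← sub_add_cancel l⁻¹ 1, hb, haN]
      ring
    exact Prod.ext hl (by rw [hq', haN])

theorem stmt8 (n : ℕ) (M : Set (EuclideanSpace ℝ (Fin n)))
    (hclosed : IsClosed M) (hconv : Convex ℝ M)
    (hcone : ∀ x ∈ M, ∀ r : ℝ, 0 ≤ r → r • x ∈ M)
    (hstrong : M ∩ (-M) = {0})
    (hdim : 2 ≤ Module.finrank ℝ (Submodule.span ℝ M))
    (v : EuclideanSpace ℝ (Fin n)) (hv : v ∈ intrinsicInterior ℝ M) (hv1 : ‖v‖ = 1) :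
    ∀ w ∈ M, ‖w‖ = 1 → w ≠ v →
      ∃! p : ℝ × EuclideanSpace ℝ (Fin n),
        p.1 ∈ Set.Ioc (0 : ℝ) 1 ∧ p.2 ∈ M \ intrinsicInterior ℝ M ∧ ‖p.2‖ = 1 ∧
        w = ‖(1 - p.1) • v + p.1 • p.2‖⁻¹ • ((1 - p.1) • v + p.1 • p.2) :=
  stmt8_general n M hclosed hconv hcone hstrong v hv hv1
end

section
/- With notation as in the unique decomposition of points on a strongly convex cone: the maps w ↦ P(w) (the boundary point) and w ↦ λ_w are continuous from (M ∩ S^{n−1}) ∖ {v} to S^{n−1} and [0,1] respectively, where w = ((1−λ_w)v + λ_w P(w))/‖(1−λ_w)v + λ_w P(w)‖. -/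
/-!
The pair `(λ_w, P(w))` is the unique preimage of `w` under the normalized combination
`(l, u) ↦ ((1 - l) v + l u) / ‖(1 - l) v + l u‖` restricted to the compact set
`[0, 1] × (bd M ∩ S^{n-1})`; on that set the combination never vanishes because `M` is pointed,
so the map is continuous there, and a section of a continuous map that picks the unique preimage in
a compact set is continuous. Uniqueness extends to the endpoint `l = 0`, which is sent to the
excluded point `v`.
-/

open Set Filter Topology

theorem IsClosed.sdiff_intrinsicInterior {𝕜 V P : Type*} [Ring 𝕜] [AddCommGroup V] [Module 𝕜 V]
    [TopologicalSpace P] [AddTorsor V P] {s : Set P} (hs : IsClosed s) :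
    IsClosed (s \ intrinsicInterior 𝕜 s) := by
  obtain ⟨U, hU, hUs⟩ := isOpen_induced_iff.mp
    (isOpen_interior (s := ((↑) ⁻¹' s : Set (affineSpan 𝕜 s))))
  convert hs.sdiff hU using 1
  ext x
  simp only [intrinsicInterior, ← hUs]
  constructor
  · rintro ⟨hx, hxU⟩
    exact ⟨hx, fun h => hxU ⟨⟨x, subset_affineSpan 𝕜 s hx⟩, h, rfl⟩⟩
  · rintro ⟨hx, hxU⟩
    exact ⟨hx, fun ⟨y, hy, hyx⟩ => hxU (hyx ▸ hy)⟩

theorem eq_zero_of_add_eq_zero_of_inter_neg {E : Type*} [AddCommGroup E] {M : Set E}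
    (hM : M ∩ -M = {0}) {x y : E} (hx : x ∈ M) (hy : y ∈ M) (h : x + y = 0) : x = 0 := by
  have hxy : -x = y := (eq_neg_of_add_eq_zero_right h).symm
  exact hM.subset ⟨hx, by rwa [Set.mem_neg, hxy]⟩

theorem one_sub_smul_add_smul_ne_zero {𝕜 E : Type*} [Field 𝕜] [LinearOrder 𝕜]
    [IsStrictOrderedRing 𝕜] [AddCommGroup E] [Module 𝕜 E] {M : Set E}
    (hcone : ∀ x ∈ M, ∀ r : 𝕜, 0 ≤ r → r • x ∈ M) (hM : M ∩ -M = {0})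
    {v u : E} (hv : v ∈ M) (hv0 : v ≠ 0) (hu : u ∈ M) (hu0 : u ≠ 0) {l : 𝕜} (hl : l ∈ Icc 0 1) :
    (1 - l) • v + l • u ≠ 0 := by
  intro h
  have hv' : (1 - l) • v = 0 :=
    eq_zero_of_add_eq_zero_of_inter_neg hM (hcone v hv _ (sub_nonneg.2 hl.2)) (hcone u hu l hl.1) h
  have hl1 : l = 1 := by
    rcases smul_eq_zero.1 hv' with h1 | h1
    · exact (sub_eq_zero.1 h1).symm
    · exact absurd h1 hv0
  subst hl1
  simp [hu0] at h

theorem IsCompact.continuousOn_of_leftInvOn {X Y : Type*} [TopologicalSpace X]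
    [TopologicalSpace Y] [T2Space Y] {C : Set X} {S : Set Y} {F : X → Y} {f : Y → X}
    (hC : IsCompact C) (hF : ContinuousOn F C) (hf : MapsTo f S C) (hFf : LeftInvOn F f S)
    (huniq : ∀ w ∈ S, ∀ p ∈ C, F p = w → p = f w) : ContinuousOn f S := by
  intro w hw
  have hfC : Tendsto f (𝓝[S] w) (𝓟 C) := tendsto_principal.2 (eventually_nhdsWithin_of_forall hf)
  refine hC.tendsto_nhds_of_unique_mapClusterPt (tendsto_principal.1 hfC) fun p hpC hp => ?_
  refine huniq w hw p hpC (eq_of_nhds_neBot ?_)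
  have hFp : MapClusterPt (F p) (𝓝[S] w) (F ∘ f) :=
    hp.tendsto_comp' ((hF p hpC).mono_left (inf_le_inf_left _ hfC))
  have hFf_tendsto : Tendsto (F ∘ f) (𝓝[S] w) (𝓝 w) :=
    tendsto_nhdsWithin_of_tendsto_nhds tendsto_id |>.congr'
      (eventually_nhdsWithin_of_forall fun x hx => (hFf hx).symm)
  exact hFp.clusterPt.mono hFf_tendsto

section NormalizedLineMap

variable {E : Type*} [NormedAddCommGroup E] [NormedSpace ℝ E] {v : E}

noncomputable def normalizedLineMap (v : E) (p : ℝ × E) : E :=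
  ‖(1 - p.1) • v + p.1 • p.2‖⁻¹ • ((1 - p.1) • v + p.1 • p.2)

theorem continuousAt_normalizedLineMap {p : ℝ × E} (hp : (1 - p.1) • v + p.1 • p.2 ≠ 0) :
    ContinuousAt (normalizedLineMap v) p := by
  have hg : Continuous fun p : ℝ × E => (1 - p.1) • v + p.1 • p.2 := by fun_prop
  exact (hg.norm.continuousAt.inv₀ (norm_ne_zero_iff.2 hp)).smul hg.continuousAt

theorem normalizedLineMap_zero (hv : ‖v‖ = 1) (u : E) : normalizedLineMap v (0, u) = v := by
  simp [normalizedLineMap, hv]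

end NormalizedLineMap

open Real
open scoped BigOperators

theorem stmt9_general (n : ℕ) (M : Set (EuclideanSpace ℝ (Fin n)))
    (hclosed : IsClosed M)
    (hcone : ∀ x ∈ M, ∀ r : ℝ, 0 ≤ r → r • x ∈ M)
    (hstrong : M ∩ (-M) = {0})
    (v : EuclideanSpace ℝ (Fin n)) (hv : v ∈ intrinsicInterior ℝ M) (hv1 : ‖v‖ = 1)
    (P : EuclideanSpace ℝ (Fin n) → EuclideanSpace ℝ (Fin n))
    (lam : EuclideanSpace ℝ (Fin n) → ℝ)
    (hPlam : ∀ w ∈ (M ∩ Metric.sphere (0 : EuclideanSpace ℝ (Fin n)) 1) \ {v},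
      lam w ∈ Set.Ioc (0 : ℝ) 1 ∧ P w ∈ M \ intrinsicInterior ℝ M ∧ ‖P w‖ = 1 ∧
      w = ‖(1 - lam w) • v + lam w • P w‖⁻¹ • ((1 - lam w) • v + lam w • P w))
    (huniq : ∀ w ∈ (M ∩ Metric.sphere (0 : EuclideanSpace ℝ (Fin n)) 1) \ {v},
      ∀ (l : ℝ) (u : EuclideanSpace ℝ (Fin n)),
        l ∈ Set.Ioc (0 : ℝ) 1 → u ∈ M \ intrinsicInterior ℝ M → ‖u‖ = 1 →
        w = ‖(1 - l) • v + l • u‖⁻¹ • ((1 - l) • v + l • u) → l = lam w ∧ u = P w) :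
    ContinuousOn P ((M ∩ Metric.sphere (0 : EuclideanSpace ℝ (Fin n)) 1) \ {v}) ∧
    ContinuousOn lam ((M ∩ Metric.sphere (0 : EuclideanSpace ℝ (Fin n)) 1) \ {v}) := by
  set C := Set.Icc (0 : ℝ) 1 ×ˢ ((M \ intrinsicInterior ℝ M) ∩ Metric.sphere 0 1)
  have hC : IsCompact C :=
    isCompact_Icc.prod ((isCompact_sphere 0 1).inter_left hclosed.sdiff_intrinsicInterior)
  have hF : ContinuousOn (normalizedLineMap v) C := fun p ⟨hl, ⟨hpM, _⟩, hp1⟩ =>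
    (continuousAt_normalizedLineMap <| one_sub_smul_add_smul_ne_zero hcone hstrong
      (intrinsicInterior_subset hv) (ne_zero_of_norm_ne_zero <| hv1.trans_ne one_ne_zero) hpM
      (ne_zero_of_mem_sphere one_ne_zero ⟨_, hp1⟩) hl).continuousWithinAt
  have hf : ContinuousOn (fun w => (lam w, P w)) ((M ∩ Metric.sphere 0 1) \ {v}) := by
    refine hC.continuousOn_of_leftInvOn hF (fun w hw => ?_) (fun w hw => (hPlam w hw).2.2.2.symm)
      fun w hw p ⟨hl, hpB, hp1⟩ hpw => ?_
    · obtain ⟨hl, hP, hP1, -⟩ := hPlam w hw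
      exact ⟨Set.Ioc_subset_Icc_self hl, hP, by simpa using hP1⟩
    · have hl0 : p.1 ≠ 0 := by
        rintro h
        refine hw.2 (hpw ▸ ?_)
        rw [← Prod.mk.eta (p := p), h, normalizedLineMap_zero hv1]
        rfl
      obtain ⟨h1, h2⟩ := huniq w hw p.1 p.2 ⟨hl.1.lt_of_ne' hl0, hl.2⟩ hpB
        (by simpa using hp1) hpw.symm
      exact Prod.ext h1 h2
  exact ⟨continuous_snd.comp_continuousOn hf, continuous_fst.comp_continuousOn hf⟩

theorem stmt9 (n : ℕ) (M : Set (EuclideanSpace ℝ (Fin n)))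
    (hclosed : IsClosed M) (hconv : Convex ℝ M)
    (hcone : ∀ x ∈ M, ∀ r : ℝ, 0 ≤ r → r • x ∈ M)
    (hstrong : M ∩ (-M) = {0})
    (hdim : 2 ≤ Module.finrank ℝ (Submodule.span ℝ M))
    (v : EuclideanSpace ℝ (Fin n)) (hv : v ∈ intrinsicInterior ℝ M) (hv1 : ‖v‖ = 1)
    (P : EuclideanSpace ℝ (Fin n) → EuclideanSpace ℝ (Fin n))
    (lam : EuclideanSpace ℝ (Fin n) → ℝ)
    (hPlam : ∀ w ∈ (M ∩ Metric.sphere (0 : EuclideanSpace ℝ (Fin n)) 1) \ {v},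
      lam w ∈ Set.Ioc (0 : ℝ) 1 ∧ P w ∈ M \ intrinsicInterior ℝ M ∧ ‖P w‖ = 1 ∧
      w = ‖(1 - lam w) • v + lam w • P w‖⁻¹ • ((1 - lam w) • v + lam w • P w))
    (huniq : ∀ w ∈ (M ∩ Metric.sphere (0 : EuclideanSpace ℝ (Fin n)) 1) \ {v},
      ∀ (l : ℝ) (u : EuclideanSpace ℝ (Fin n)),
        l ∈ Set.Ioc (0 : ℝ) 1 → u ∈ M \ intrinsicInterior ℝ M → ‖u‖ = 1 →
        w = ‖(1 - l) • v + l • u‖⁻¹ • ((1 - l) • v + l • u) → l = lam w ∧ u = P w) :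
    ContinuousOn P ((M ∩ Metric.sphere (0 : EuclideanSpace ℝ (Fin n)) 1) \ {v}) ∧
    ContinuousOn lam ((M ∩ Metric.sphere (0 : EuclideanSpace ℝ (Fin n)) 1) \ {v}) :=
  stmt9_general n M hclosed hcone hstrong v hv hv1 P lam hPlam huniq
end

section
/- Suppose for every unit vector v ∈ ℝⁿ there exists s ∈ Y with v·c(s) > 0. Then for every nonempty Z ⊆ Y the polyhedral cone M(Z) = { v : v·(c_s/F(s) − c_z/F(z)) ≤ 0 ∀s ∈ Y∖Z, z ∈ Z; v·(c_{z'}/F(z') − c_z/F(z)) = 0 ∀z,z' ∈ Z } is strongly convex: M(Z) ∩ (−M(Z)) = {0}. -/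
/-!
On `M(Z) ∩ (-M(Z))` all the defining inequalities become equalities, so `⟪v, c s / F s⟫` does not
depend on `s`: `⟪v, c s⟫ = F s * a` for a constant `a`. Since `F > 0`, either `v` or `-v` then has
nonpositive inner product with every `c s`, which the hypothesis on `c` only allows for the zero vector.
-/

open Real
open scoped InnerProductSpace BigOperators

/-- The polyhedral cone `M(Z)` from the paper. -/
def Mcone {n : ℕ} {Y : Type*} [Fintype Y] (F : Y → ℝ) (c : Y → EuclideanSpace ℝ (Fin n))
    (Z : Finset Y) : Set (EuclideanSpace ℝ (Fin n)) :=
  {v | (∀ s ∉ Z, ∀ z ∈ Z, ⟪v, (F s)⁻¹ • c s - (F z)⁻¹ • c z⟫_ℝ ≤ 0) ∧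
       ∀ z ∈ Z, ∀ z' ∈ Z, ⟪v, (F z')⁻¹ • c z' - (F z)⁻¹ • c z⟫_ℝ = 0}

section InnerProductSpace

variable {E ι : Type*} [NormedAddCommGroup E] [InnerProductSpace ℝ E] {c : ι → E}

lemma eq_zero_of_forall_inner_nonpos (hc : ∀ v : E, ‖v‖ = 1 → ∃ s, 0 < ⟪v, c s⟫_ℝ) {v : E}
    (h : ∀ s, ⟪v, c s⟫_ℝ ≤ 0) : v = 0 := by
  by_contra hv
  obtain ⟨s, hs⟩ := hc (‖v‖⁻¹ • v) (norm_smul_inv_norm hv)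
  rw [real_inner_smul_left] at hs
  exact (mul_nonpos_of_nonneg_of_nonpos (inv_nonneg.2 (norm_nonneg v)) (h s)).not_gt hs

lemma eq_zero_of_inner_eq_mul (hc : ∀ v : E, ‖v‖ = 1 → ∃ s, 0 < ⟪v, c s⟫_ℝ) {F : ι → ℝ}
    (hF : ∀ s, 0 < F s) {v : E} {a : ℝ} (h : ∀ s, ⟪v, c s⟫_ℝ = F s * a) : v = 0 := by
  rcases le_total a 0 with ha | ha
  · refine eq_zero_of_forall_inner_nonpos hc fun s => ?_
    rw [h s]
    exact mul_nonpos_of_nonneg_of_nonpos (hF s).le ha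
  · refine neg_eq_zero.1 (eq_zero_of_forall_inner_nonpos hc fun s => ?_)
    rw [inner_neg_left, h s, neg_nonpos]
    exact mul_nonneg (hF s).le ha

end InnerProductSpace

section Mcone

variable {n : ℕ} {Y : Type*} [Fintype Y] {F : Y → ℝ} {c : Y → EuclideanSpace ℝ (Fin n)}
  {Z : Finset Y}

lemma zero_mem_Mcone : (0 : EuclideanSpace ℝ (Fin n)) ∈ Mcone F c Z :=
  ⟨fun _ _ _ _ => by simp, fun _ _ _ _ => by simp⟩

lemma inner_eq_of_mem_Mcone_of_neg_mem {v : EuclideanSpace ℝ (Fin n)} (hv : v ∈ Mcone F c Z)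
    (hnv : -v ∈ Mcone F c Z) {z : Y} (hz : z ∈ Z) (s : Y) :
    ⟪v, (F s)⁻¹ • c s⟫_ℝ = ⟪v, (F z)⁻¹ • c z⟫_ℝ := by
  rw [← sub_eq_zero, ← inner_sub_right]
  by_cases hs : s ∈ Z
  · exact hv.2 z hz s hs
  · have hneg := hnv.1 s hs z hz
    rw [inner_neg_left, neg_nonpos] at hneg
    exact le_antisymm (hv.1 s hs z hz) hneg

end Mcone

theorem stmt11 (n : ℕ) (Y : Type*) [Fintype Y] (F : Y → ℝ) (hF : ∀ s, 0 < F s)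
    (c : Y → EuclideanSpace ℝ (Fin n))
    (hc : ∀ v : EuclideanSpace ℝ (Fin n), ‖v‖ = 1 → ∃ s, 0 < ⟪v, c s⟫_ℝ)
    (Z : Finset Y) (hZ : Z.Nonempty) :
    Mcone F c Z ∩ (-(Mcone F c Z)) = {0} := by
  obtain ⟨z, hz⟩ := hZ
  have zero_mem_neg : (0 : EuclideanSpace ℝ (Fin n)) ∈ -Mcone F c Z := by
    rw [Set.mem_neg, neg_zero]
    exact zero_mem_Mcone
  refine Set.eq_singleton_iff_unique_mem.2 ⟨⟨zero_mem_Mcone, zero_mem_neg⟩, ?_⟩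
  rintro v ⟨hv, hnv⟩
  refine eq_zero_of_inner_eq_mul hc hF (a := ⟪v, (F z)⁻¹ • c z⟫_ℝ) fun s => ?_
  rw [← inv_mul_eq_iff_eq_mul₀ (hF s).ne', ← real_inner_smul_right]
  exact inner_eq_of_mem_Mcone_of_neg_mem hv hnv hz s
end

section
/- Let G be a finitely generated group generated as a semigroup by a finite set Y with at least two elements, F : Y → ℝ, β ∈ ℝ, and let ψ : G → [0,∞) be normalized β-harmonic: ψ_{e} = 1 and ∑_{s∈Y} e^{−βF(s)} ψ_{gs} = ψ_g for all g ∈ G. Suppose ψ is abelian (ψ_{hgk} = ψ_{hkg} for all h,g,k) and extremal in the convex set Δ of normalized abelian β-harmonic vectors. Then ψ is multiplicative: ψ_{gh} = ψ_g ψ_h for all g,h ∈ G; equivalently there is a group homomorphism c : G → ℝ with ψ_g = e^{c(g)}. -/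
/-!
The harmonicity equation at `g` says `ψ = ∑_{s ∈ Y} w_s • ψ_s`, where `ψ_s g = ψ (g s) / ψ s`
and `w_s = e^{-βF(s)} ψ s`. The weights are positive (harmonicity propagates zeros along
right multiplication by generators, so a zero of `ψ` would force `ψ e = 0`) and sum to `1`
(harmonicity at `e`), and the abelian condition is exactly what makes each right translate `ψ_s`
again abelian harmonic. Extremality thus forces `ψ = ψ_s`, i.e. `ψ (g s) = ψ g ψ s` for every
generator `s`, and multiplicativity spreads from generators to all of `G`.
-/

open Real
open scoped BigOperators

/-- `ψ` is a normalized abelian `β`-harmonic vector on `G` (membership in `Δ`). -/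
def IsAbelHarm {G : Type*} [Group G] (Y : Finset G) (F : G → ℝ) (β : ℝ) (ψ : G → ℝ) : Prop :=
  (∀ g, 0 ≤ ψ g) ∧ ψ 1 = 1 ∧
  (∀ g, ∑ s ∈ Y, Real.exp (-(β * F s)) * ψ (g * s) = ψ g) ∧
  ∀ h g k, ψ (h * g * k) = ψ (h * k * g)

open Finset

theorem Convex.eq_of_eq_sum_smul_of_extremal {ι E : Type*} [AddCommGroup E] [Module ℝ E]
    {S : Set E} (hS : Convex ℝ S) {x : E}
    (hx : ∀ y₁ ∈ S, ∀ y₂ ∈ S, ∀ lam : ℝ, 0 < lam → lam < 1 →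
      x = lam • y₁ + (1 - lam) • y₂ → y₁ = y₂)
    {t : Finset ι} {w : ι → ℝ} {y : ι → E} (hw : ∀ i ∈ t, 0 < w i) (hw₁ : ∑ i ∈ t, w i = 1)
    (hy : ∀ i ∈ t, y i ∈ S) (hxy : x = ∑ i ∈ t, w i • y i) {i : ι} (hi : i ∈ t) :
    x = y i := by
  classical
  set r := ∑ j ∈ t.erase i, w j
  have hwi : w i + r = 1 := by rw [add_sum_erase t w hi, hw₁]
  have hx_split : x = w i • y i + ∑ j ∈ t.erase i, w j • y j := by
    rw [add_sum_erase t (fun j => w j • y j) hi, hxy]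
  rcases (t.erase i).eq_empty_or_nonempty with hrest | hrest
  · have hwi₁ : w i = 1 := by simpa [r, hrest] using hwi
    simpa [hrest, hwi₁] using hx_split
  have hr : 0 < r := sum_pos (fun j hj => hw j (mem_of_mem_erase hj)) hrest
  set z := ∑ j ∈ t.erase i, (w j / r) • y j
  have hz : z ∈ S := hS.sum_mem (fun j hj => (div_pos (hw j (mem_of_mem_erase hj)) hr).le)
    (by rw [← sum_div, div_self hr.ne']) (fun j hj => hy j (mem_of_mem_erase hj))
  have hrz : r • z = ∑ j ∈ t.erase i, w j • y j := by
    rw [smul_sum]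
    refine sum_congr rfl fun j _ => ?_
    rw [smul_smul, mul_div_cancel₀ _ hr.ne']
  have hr_eq : r = 1 - w i := by linarith
  have hyz : y i = z := hx (y i) (hy i hi) z hz (w i) (hw i hi) (by linarith)
    (by rw [hx_split, ← hrz, hr_eq])
  rw [hx_split, ← hrz, ← hyz, ← add_smul, hwi, one_smul]

theorem Submonoid.closure_eq_top_of_forall_exists_list_prod {M : Type*} [Monoid M] {s : Set M}
    (h : ∀ x : M, ∃ l : List M, (∀ y ∈ l, y ∈ s) ∧ l.prod = x) : closure s = ⊤ := by
  refine eq_top_iff.mpr fun x _ => ?_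
  obtain ⟨l, hl, rfl⟩ := h x
  exact _root_.list_prod_mem fun y hy => mem_closure_of_mem (hl y hy)

theorem map_mul_of_map_mul_of_closure_eq_top {M N : Type*} [Monoid M] [Monoid N] {s : Set M}
    (hs : Submonoid.closure s = ⊤) {f : M → N} (h₁ : f 1 = 1)
    (hmul : ∀ y ∈ s, ∀ x, f (x * y) = f x * f y) (x y : M) : f (x * y) = f x * f y := by
  induction y using Submonoid.induction_of_closure_eq_top_right hs generalizing x with
  | one => rw [mul_one, h₁, mul_one]
  | mul_right y z hz ih => rw [← mul_assoc, hmul z hz, ih, hmul z hz, mul_assoc]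

namespace IsAbelHarm

variable {G : Type*} [Group G] {Y : Finset G} {F : G → ℝ} {β : ℝ} {ψ : G → ℝ}

theorem convex : Convex ℝ {φ : G → ℝ | IsAbelHarm Y F β φ} := by
  intro φ hφ χ hχ a b ha hb hab
  refine ⟨fun g => ?_, ?_, fun g => ?_, fun h g k => ?_⟩ <;>
    simp only [Pi.add_apply, Pi.smul_apply, smul_eq_mul]
  · exact add_nonneg (mul_nonneg ha (hφ.1 g)) (mul_nonneg hb (hχ.1 g))
  · rw [hφ.2.1, hχ.2.1, mul_one, mul_one, hab]
  · rw [← hφ.2.2.1 g, ← hχ.2.2.1 g, mul_sum, mul_sum, ← sum_add_distrib]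
    exact sum_congr rfl fun s _ => by ring
  · rw [hφ.2.2.2, hχ.2.2.2]

theorem div_apply_mul_right (hψ : IsAbelHarm Y F β ψ) {s : G} (hs : 0 < ψ s) :
    IsAbelHarm Y F β (fun g => ψ (g * s) / ψ s) := by
  obtain ⟨hnonneg, hone, hharm, habel⟩ := hψ
  refine ⟨fun g => div_nonneg (hnonneg _) hs.le, by simp [div_self hs.ne'], fun g => ?_,
    fun h g k => ?_⟩
  · change ∑ t ∈ Y, exp (-(β * F t)) * (ψ (g * t * s) / ψ s) = ψ (g * s) / ψ s
    rw [← hharm (g * s), sum_div]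
    exact sum_congr rfl fun t _ => by rw [habel g t s, mul_div_assoc]
  · show ψ (h * g * k * s) / ψ s = ψ (h * k * g * s) / ψ s
    rw [mul_assoc _ k s, habel h g (k * s), habel (h * k) g s, mul_assoc h k s]

theorem apply_mul_eq_zero (hψ : IsAbelHarm Y F β ψ) {g : G} (hg : ψ g = 0) {s : G}
    (hs : s ∈ Y) : ψ (g * s) = 0 := by
  have hsum := hψ.2.2.1 g
  rw [hg, sum_eq_zero_iff_of_nonneg fun t _ => mul_nonneg (exp_pos _).le (hψ.1 _)] at hsum
  exact (mul_eq_zero.mp (hsum s hs)).resolve_left (exp_pos _).ne'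

theorem pos (hψ : IsAbelHarm Y F β ψ) (hY : Submonoid.closure (Y : Set G) = ⊤) (g : G) :
    0 < ψ g := by
  refine (hψ.1 g).lt_of_ne' fun hg => ?_
  have hzero : ∀ x, ψ (g * x) = 0 := fun x => by
    induction x using Submonoid.induction_of_closure_eq_top_right hY with
    | one => rwa [mul_one]
    | mul_right x s hs ih => rw [← mul_assoc]; exact hψ.apply_mul_eq_zero ih hs
  simpa [hψ.2.1] using hzero g⁻¹

theorem sum_weight_eq_one (hψ : IsAbelHarm Y F β ψ) : ∑ s ∈ Y, exp (-(β * F s)) * ψ s = 1 := by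
  simpa only [one_mul, hψ.2.1] using hψ.2.2.1 1

theorem eq_sum_smul_div_apply_mul_right (hψ : IsAbelHarm Y F β ψ) (hpos : ∀ g, 0 < ψ g) :
    ψ = ∑ s ∈ Y, (exp (-(β * F s)) * ψ s) • fun g => ψ (g * s) / ψ s := by
  funext g
  rw [← hψ.2.2.1 g, Finset.sum_apply]
  exact sum_congr rfl fun s _ => by
    simp only [Pi.smul_apply, smul_eq_mul]
    field_simp [(hpos s).ne']

theorem apply_mul_of_extremal (hψ : IsAbelHarm Y F β ψ) (hpos : ∀ g, 0 < ψ g)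
    (hext : ∀ φ₁ φ₂ : G → ℝ, IsAbelHarm Y F β φ₁ → IsAbelHarm Y F β φ₂ →
      ∀ lam : ℝ, 0 < lam → lam < 1 →
        (∀ g, ψ g = lam * φ₁ g + (1 - lam) * φ₂ g) → φ₁ = φ₂)
    {s : G} (hs : s ∈ Y) (g : G) : ψ (g * s) = ψ g * ψ s := by
  have hψs := convex.eq_of_eq_sum_smul_of_extremal
    (fun φ₁ h₁ φ₂ h₂ lam h₀ h₁' hdecomp => hext φ₁ φ₂ h₁ h₂ lam h₀ h₁' (congrFun hdecomp))
    (fun t _ => mul_pos (exp_pos _) (hpos t)) hψ.sum_weight_eq_one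
    (fun t _ => hψ.div_apply_mul_right (hpos t)) (hψ.eq_sum_smul_div_apply_mul_right hpos) hs
  rw [congrFun hψs g, div_mul_cancel₀ _ (hpos s).ne']

end IsAbelHarm

theorem stmt12_general (G : Type*) [Group G] (Y : Finset G)
    (hgen : ∀ g : G, ∃ l : List G, (∀ x ∈ l, x ∈ Y) ∧ l.prod = g)
    (F : G → ℝ) (β : ℝ) (ψ : G → ℝ)
    (hψ : IsAbelHarm Y F β ψ)
    (hext : ∀ φ₁ φ₂ : G → ℝ, IsAbelHarm Y F β φ₁ → IsAbelHarm Y F β φ₂ →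
      ∀ lam : ℝ, 0 < lam → lam < 1 →
        (∀ g, ψ g = lam * φ₁ g + (1 - lam) * φ₂ g) → φ₁ = φ₂) :
    (∀ g h, ψ (g * h) = ψ g * ψ h) ∧
    ∃ c : G → ℝ, (∀ g h, c (g * h) = c g + c h) ∧ ∀ g, ψ g = Real.exp (c g) := by
  have hY := Submonoid.closure_eq_top_of_forall_exists_list_prod hgen
  have hpos := hψ.pos hY
  have hmul := map_mul_of_map_mul_of_closure_eq_top hY hψ.2.1
    fun s hs => hψ.apply_mul_of_extremal hpos hext hs
  exact ⟨hmul, fun g => log (ψ g),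
    fun g h => show log (ψ (g * h)) = log (ψ g) + log (ψ h) by
      rw [hmul, log_mul (hpos g).ne' (hpos h).ne'],
    fun g => (exp_log (hpos g)).symm⟩

theorem stmt12 (G : Type*) [Group G] (Y : Finset G) (hY : 2 ≤ Y.card)
    (hgen : ∀ g : G, ∃ l : List G, (∀ x ∈ l, x ∈ Y) ∧ l.prod = g)
    (F : G → ℝ) (β : ℝ) (ψ : G → ℝ)
    (hψ : IsAbelHarm Y F β ψ)
    (hext : ∀ φ₁ φ₂ : G → ℝ, IsAbelHarm Y F β φ₁ → IsAbelHarm Y F β φ₂ →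
      ∀ lam : ℝ, 0 < lam → lam < 1 →
        (∀ g, ψ g = lam * φ₁ g + (1 - lam) * φ₂ g) → φ₁ = φ₂) :
    (∀ g h, ψ (g * h) = ψ g * ψ h) ∧
    ∃ c : G → ℝ, (∀ g h, c (g * h) = c g + c h) ∧ ∀ g, ψ g = Real.exp (c g) :=
  stmt12_general G Y hgen F β ψ hψ hext
end

section
/- Let β > log 2 and c(β) > 0 the positive solution of e^c + e^{−c} = e^β. Define x_n = t e^{c(β)n} + (1−t)e^{−c(β)n} and y_n = t e^{c(β)(n−1)} + (1−t)e^{−c(β)(n−1)} for t ∈ [0,1]. Then the pair (x, y) satisfies, for all n ∈ ℤ: x_n ≥ 0, y_n ≥ 0, e^β x_n = x_{n+1} + y_n, and e^β y_n = x_n + y_{n−1}. -/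
open Real

theorem exp_add_exp_neg_mul_eq_add_shifts (c A B s : ℝ) :
    (exp c + exp (-c)) * (A * exp (c * s) + B * exp (-(c * s))) =
      (A * exp (c * (s + 1)) + B * exp (-(c * (s + 1)))) +
        (A * exp (c * (s - 1)) + B * exp (-(c * (s - 1)))) := by
  simp only [mul_add, mul_sub, mul_one, neg_add, neg_sub, exp_add, exp_sub, exp_neg]
  field_simp
  ring

theorem stmt16_general (β cβ : ℝ)
    (hce : Real.exp cβ + Real.exp (-cβ) = Real.exp β)
    (t : ℝ) (ht : t ∈ Set.Icc (0 : ℝ) 1)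
    (x y : ℤ → ℝ)
    (hx : ∀ n : ℤ, x n = t * Real.exp (cβ * (n : ℝ)) + (1 - t) * Real.exp (-(cβ * (n : ℝ))))
    (hy : ∀ n : ℤ, y n = t * Real.exp (cβ * ((n : ℝ) - 1)) +
      (1 - t) * Real.exp (-(cβ * ((n : ℝ) - 1)))) :
    ∀ n : ℤ, 0 ≤ x n ∧ 0 ≤ y n ∧
      Real.exp β * x n = x (n + 1) + y n ∧
      Real.exp β * y n = x n + y (n - 1) := by
  obtain ⟨ht0, ht1⟩ := ht
  have h1t : 0 ≤ 1 - t := sub_nonneg.2 ht1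
  intro n
  refine ⟨by rw [hx]; positivity, by rw [hy]; positivity, ?_, ?_⟩
  · rw [hx, hx, hy, ← hce]
    push_cast
    exact exp_add_exp_neg_mul_eq_add_shifts cβ t (1 - t) n
  · -- `y n` is `x (n - 1)`, so this is the same recurrence one step down
    rw [hy, hx, hy, ← hce]
    push_cast
    have h := exp_add_exp_neg_mul_eq_add_shifts cβ t (1 - t) (n - 1)
    rwa [sub_add_cancel] at h

theorem stmt16 (β cβ : ℝ) (hβ : Real.log 2 < β) (hc : 0 < cβ)
    (hce : Real.exp cβ + Real.exp (-cβ) = Real.exp β)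
    (t : ℝ) (ht : t ∈ Set.Icc (0 : ℝ) 1)
    (x y : ℤ → ℝ)
    (hx : ∀ n : ℤ, x n = t * Real.exp (cβ * (n : ℝ)) + (1 - t) * Real.exp (-(cβ * (n : ℝ))))
    (hy : ∀ n : ℤ, y n = t * Real.exp (cβ * ((n : ℝ) - 1)) +
      (1 - t) * Real.exp (-(cβ * ((n : ℝ) - 1)))) :
    ∀ n : ℤ, 0 ≤ x n ∧ 0 ≤ y n ∧
      Real.exp β * x n = x (n + 1) + y n ∧
      Real.exp β * y n = x n + y (n - 1) :=
  stmt16_general β cβ hce t ht x y hx hy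
end

section
/- Let Y be a finite set with F : Y → ℝ strictly positive, c : Y → ℝⁿ, and suppose the continuous function β : ℝⁿ → (0,∞) satisfies ∑_{s∈Y} exp(−β(u)F(s) + u·c(s)) = 1 for all u. If u₁, u₂ ∈ ℝⁿ and λ ∈ [0,1], then β((1−λ)u₁ + λu₂) ≤ (1−λ)β(u₁) + λβ(u₂); i.e. β is a convex function on ℝⁿ. -/
/-!
The partition function `Z (t, u) = ∑ s, exp (-(t * F s) + ⟪u, c s⟫)` is jointly convex, being a
sum of exponentials of linear forms, and strictly decreasing in `t`. Since `B` is cut out by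
`Z (B u, u) = 1`, convexity of `Z` gives `Z ((1 - λ) B u₁ + λ B u₂, u) ≤ 1 = Z (B u, u)` at
`u = (1 - λ) u₁ + λ u₂`, and monotonicity in `t` turns this into the convexity inequality for `B`.
-/

open Real
open scoped InnerProductSpace BigOperators

theorem ConvexOn.fun_sum {ι E : Type*} [AddCommGroup E] [Module ℝ E] {s : Set E}
    (hs : Convex ℝ s) (t : Finset ι) {f : ι → E → ℝ} (hf : ∀ i ∈ t, ConvexOn ℝ s (f i)) :
    ConvexOn ℝ s fun x => ∑ i ∈ t, f i x := by
  simp only [← Finset.sum_apply]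
  exact Finset.sum_induction f (ConvexOn ℝ s) (fun _ _ => ConvexOn.add) (convexOn_const 0 hs) hf

theorem convexOn_sum_exp_linearMap {ι E : Type*} [Fintype ι] [AddCommGroup E] [Module ℝ E]
    (ℓ : ι → E →ₗ[ℝ] ℝ) : ConvexOn ℝ Set.univ fun x => ∑ i, exp (ℓ i x) :=
  ConvexOn.fun_sum convex_univ _ fun i _ => convexOn_exp.comp_linearMap (ℓ i)

theorem strictAnti_sum_exp_neg_mul_add {ι : Type*} [Fintype ι] [Nonempty ι] {F : ι → ℝ}
    (hF : ∀ i, 0 < F i) (a : ι → ℝ) : StrictAnti fun t => ∑ i, exp (-(t * F i) + a i) :=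
  fun _ _ hlt => Finset.sum_lt_sum_of_nonempty Finset.univ_nonempty fun i _ =>
    exp_lt_exp.2 (by linarith [mul_lt_mul_of_pos_right hlt (hF i)])

theorem ConvexOn.convexOn_of_forall_apply_eq {E : Type*} [AddCommGroup E] [Module ℝ E]
    {Φ : ℝ × E → ℝ} (hΦ : ConvexOn ℝ Set.univ Φ) (hanti : ∀ u, StrictAnti fun t => Φ (t, u))
    {B : E → ℝ} {r : ℝ} (hB : ∀ u, Φ (B u, u) = r) : ConvexOn ℝ Set.univ B := by
  refine ⟨convex_univ, fun x _ y _ a b ha hb hab => ?_⟩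
  refine (hanti (a • x + b • y)).le_iff_ge.1 ?_
  calc Φ (a • B x + b • B y, a • x + b • y) = Φ (a • (B x, x) + b • (B y, y)) := by simp
    _ ≤ a • Φ (B x, x) + b • Φ (B y, y) := hΦ.2 trivial trivial ha hb hab
    _ = Φ (B (a • x + b • y), a • x + b • y) := by
      rw [hB, hB, hB, smul_eq_mul, smul_eq_mul, ← add_mul, hab, one_mul]

theorem stmt17_general (n : ℕ) (Y : Type*) [Fintype Y] (F : Y → ℝ) (hF : ∀ s, 0 < F s)
    (c : Y → EuclideanSpace ℝ (Fin n)) (B : EuclideanSpace ℝ (Fin n) → ℝ)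
    (hB : ∀ u, 0 < B u ∧ ∑ s, Real.exp (-(B u * F s) + ⟪u, c s⟫_ℝ) = 1) :
    ∀ u₁ u₂ : EuclideanSpace ℝ (Fin n), ∀ lam : ℝ, lam ∈ Set.Icc (0 : ℝ) 1 →
      B ((1 - lam) • u₁ + lam • u₂) ≤ (1 - lam) * B u₁ + lam * B u₂ := by
  rintro u₁ u₂ lam ⟨hl0, hl1⟩
  have : Nonempty Y := by
    by_contra hY
    simpa [not_nonempty_iff.1 hY] using (hB 0).2
  let ℓ (s : Y) : ℝ × EuclideanSpace ℝ (Fin n) →ₗ[ℝ] ℝ :=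
    -F s • LinearMap.fst ℝ ℝ _ + (innerₛₗ ℝ (c s)).comp (LinearMap.snd ℝ ℝ _)
  have hℓ (t : ℝ) (u : EuclideanSpace ℝ (Fin n)) (s : Y) :
      ℓ s (t, u) = -(t * F s) + ⟪u, c s⟫_ℝ := by
    simp [ℓ, real_inner_comm, mul_comm]
  have hconv : ConvexOn ℝ Set.univ B :=
    (convexOn_sum_exp_linearMap ℓ).convexOn_of_forall_apply_eq
      (fun u => by simpa only [hℓ] using strictAnti_sum_exp_neg_mul_add hF fun s => ⟪u, c s⟫_ℝ)
      (fun u => by simpa only [hℓ] using (hB u).2)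
  simpa using hconv.2 trivial trivial (by linarith) hl0 (by ring)

theorem stmt17 (n : ℕ) (Y : Type*) [Fintype Y] (F : Y → ℝ) (hF : ∀ s, 0 < F s)
    (c : Y → EuclideanSpace ℝ (Fin n)) (B : EuclideanSpace ℝ (Fin n) → ℝ)
    (hBcont : Continuous B)
    (hB : ∀ u, 0 < B u ∧ ∑ s, Real.exp (-(B u * F s) + ⟪u, c s⟫_ℝ) = 1) :
    ∀ u₁ u₂ : EuclideanSpace ℝ (Fin n), ∀ lam : ℝ, lam ∈ Set.Icc (0 : ℝ) 1 →
      B ((1 - lam) • u₁ + lam • u₂) ≤ (1 - lam) * B u₁ + lam * B u₂ :=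
  stmt17_general n Y F hF c B hB
end

section
/- Let Y be a finite set, F : Y → ℝ strictly positive, c : Y → ℝⁿ with the property that for every unit vector v there is s ∈ Y with v·c(s) > 0, and let β : ℝⁿ → (0,∞) be defined by ∑_{s∈Y} exp(−β(u)F(s) + u·c(s)) = 1. Fix a nonempty Z ⊆ Y, chosen maximal, with M(Z) of dimension ≥ 1, and v ∈ Int(M(Z)). Then for each s ∈ Y the limit lim_{r→∞} exp(−β(rv)F(s) + r v·c(s)) exists and equals t_s, where t ∈ Δ_Y is the unique probability vector with t_s ≠ 0 iff s ∈ Z and t_{s₁}^{1/F(s₁)} = t_{s₂}^{1/F(s₂)} for all s₁, s₂ ∈ Z. -/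
/-!
Write `μ s = ⟪v, c s / F s⟫`. For `v` in the relative interior of `M(Z)`, maximality of `Z`
forces `μ` to attain its maximum `m` exactly on `Z`: otherwise some `s ∉ Z` would satisfy
`⟪w, c s / F s⟫ = ⟪w, c z / F z⟫` on all of `M(Z)`, and `insert s Z` would have the same cone.
The weights are `exp (F s * (r * μ s - β (r v)))`; putting `φ r = r * m - β (r v) ≤ 0`, the
weights off `Z` decay exponentially, so `∑ z ∈ Z, exp (F z * φ r) → 1`. This sum is strictly
increasing in `φ r`, hence `φ r` tends to the root `x` of `∑ z ∈ Z, exp (F z * x) = 1`, and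
`t s = exp (F s * x)` on `Z`.
-/

open Real Filter Finset
open scoped InnerProductSpace BigOperators

theorem exists_add_smul_sub_mem_of_mem_intrinsicInterior {E : Type*} [AddCommGroup E]
    [Module ℝ E] [TopologicalSpace E] [ContinuousAdd E] [ContinuousSMul ℝ E] {S : Set E} {v w : E} (hv : v ∈ intrinsicInterior ℝ S) (hw : w ∈ S) :
    ∃ t : ℝ, 0 < t ∧ v + t • (v - w) ∈ S := by
  rw [mem_intrinsicInterior] at hv
  obtain ⟨y, hy, rfl⟩ := hv
  have hw' : w ∈ affineSpan ℝ S := subset_affineSpan ℝ S hw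
  have hline : ∀ t : ℝ, (y : E) + t • ((y : E) - w) ∈ affineSpan ℝ S := fun t => by
    simpa [vsub_eq_sub, vadd_eq_add, add_comm] using
      (affineSpan ℝ S).smul_vsub_vadd_mem t y.2 hw' y.2
  let f : ℝ → affineSpan ℝ S := fun t => ⟨(y : E) + t • ((y : E) - w), hline t⟩
  have hf : Continuous f := by fun_prop
  have hf0 : f 0 = y := by simp [f]
  have hnhds : f ⁻¹' interior ((↑) ⁻¹' S) ∈ nhds (0 : ℝ) :=
    hf.continuousAt.preimage_mem_nhds (hf0 ▸ isOpen_interior.mem_nhds hy)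
  obtain ⟨ε, hε, hball⟩ := Metric.mem_nhds_iff.mp hnhds
  have hε2 : ε / 2 ∈ Metric.ball (0 : ℝ) ε := by
    rw [Metric.mem_ball, Real.dist_eq, sub_zero, abs_of_pos (by positivity)]
    linarith
  exact ⟨ε / 2, by positivity, by simpa [f] using interior_subset (hball hε2)⟩

section Mcone

variable {n : ℕ} {Y : Type*} [Fintype Y] {F : Y → ℝ} {c : Y → EuclideanSpace ℝ (Fin n)}
  {Z : Finset Y}

theorem mem_Mcone_iff {w : EuclideanSpace ℝ (Fin n)} :
    w ∈ Mcone F c Z ↔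
      (∀ s ∉ Z, ∀ z ∈ Z, ⟪w, (F s)⁻¹ • c s⟫_ℝ ≤ ⟪w, (F z)⁻¹ • c z⟫_ℝ) ∧
        ∀ z ∈ Z, ∀ z' ∈ Z, ⟪w, (F z')⁻¹ • c z'⟫_ℝ = ⟪w, (F z)⁻¹ • c z⟫_ℝ := by
  simp only [Mcone, Set.mem_ofPred_eq, inner_sub_right, sub_nonpos, sub_eq_zero]

theorem Mcone_insert_eq [DecidableEq Y] {s z : Y} (hz : z ∈ Z)
    (h : ∀ w ∈ Mcone F c Z, ⟪w, (F s)⁻¹ • c s⟫_ℝ = ⟪w, (F z)⁻¹ • c z⟫_ℝ) :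
    Mcone F c (insert s Z) = Mcone F c Z := by
  ext w
  constructor
  · intro hw
    rw [mem_Mcone_iff] at hw ⊢
    refine ⟨fun s' hs' z' hz' => ?_,
      fun z₁ h₁ z₂ h₂ => hw.2 _ (mem_insert_of_mem h₁) _ (mem_insert_of_mem h₂)⟩
    by_cases hss : s' = s
    · subst hss
      exact (hw.2 _ (mem_insert_of_mem hz') _ (mem_insert_self _ _)).le
    · exact hw.1 s' (by simp [hs', hss]) z' (mem_insert_of_mem hz')
  · intro hw
    have hsw := h w hw
    rw [mem_Mcone_iff] at hw ⊢
    have hrate : ∀ z' ∈ insert s Z, ⟪w, (F z')⁻¹ • c z'⟫_ℝ = ⟪w, (F z)⁻¹ • c z⟫_ℝ := by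
      intro z' hz'
      rcases mem_insert.1 hz' with rfl | hz'
      exacts [hsw, hw.2 z hz z' hz']
    refine ⟨fun s' hs' z' hz' => ?_, fun z₁ h₁ z₂ h₂ => by rw [hrate _ h₁, hrate _ h₂]⟩
    rw [hrate z' hz']
    exact hw.1 s' (fun h => hs' (mem_insert_of_mem h)) z hz

theorem inner_lt_of_mem_intrinsicInterior_Mcone
    (hmax : ∀ Z' : Finset Y, Mcone F c Z = Mcone F c Z' → Z' ⊆ Z)
    {v : EuclideanSpace ℝ (Fin n)} (hv : v ∈ intrinsicInterior ℝ (Mcone F c Z))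
    {s z : Y} (hs : s ∉ Z) (hz : z ∈ Z) :
    ⟪v, (F s)⁻¹ • c s⟫_ℝ < ⟪v, (F z)⁻¹ • c z⟫_ℝ := by
  classical
  refine ((mem_Mcone_iff.1 (intrinsicInterior_subset hv)).1 s hs z hz).lt_of_ne fun heq => hs ?_
  refine hmax _ (Mcone_insert_eq hz fun w hw => ?_).symm (mem_insert_self s Z)
  -- `⟪·, c s / F s - c z / F z⟫` is `≤ 0` on the cone and vanishes at the relative interior
  -- point `v`; evaluating it at `v + t • (v - w)` shows that it vanishes at `w`.
  obtain ⟨t, ht, htM⟩ := exists_add_smul_sub_mem_of_mem_intrinsicInterior hv hw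
  have h₁ := (mem_Mcone_iff.1 htM).1 s hs z hz
  have h₂ := (mem_Mcone_iff.1 hw).1 s hs z hz
  simp only [inner_add_left, real_inner_smul_left, inner_sub_left] at h₁
  nlinarith

end Mcone

theorem StrictMono.tendsto_of_tendsto_comp {α β γ : Type*} [LinearOrder β] [TopologicalSpace β]
    [OrderTopology β] [Preorder γ] [TopologicalSpace γ] [OrderTopology γ] {ψ : β → γ}
    (hψ : StrictMono ψ) {l : Filter α} {φ : α → β} {a : β}
    (h : Tendsto (ψ ∘ φ) l (nhds (ψ a))) : Tendsto φ l (nhds a) := by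
  rw [tendsto_order] at h ⊢
  exact ⟨fun b hb => (h.1 _ (hψ hb)).mono fun _ => hψ.lt_iff_lt.mp,
    fun b hb => (h.2 _ (hψ hb)).mono fun _ => hψ.lt_iff_lt.mp⟩

section SumExp

variable {Y : Type*} {F : Y → ℝ} {Z : Finset Y}

theorem strictMono_sum_exp_mul (hZ : Z.Nonempty) (hF : ∀ z ∈ Z, 0 < F z) :
    StrictMono fun x => ∑ z ∈ Z, exp (F z * x) := fun _ _ hxy =>
  sum_lt_sum_of_nonempty hZ fun z hz => exp_lt_exp.mpr (mul_lt_mul_of_pos_left hxy (hF z hz))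

theorem exists_sum_exp_mul_eq_one (hZ : Z.Nonempty) (hF : ∀ z ∈ Z, 0 < F z) :
    ∃ x, ∑ z ∈ Z, exp (F z * x) = 1 := by
  have hcont : Continuous fun x => ∑ z ∈ Z, exp (F z * x) := by fun_prop
  have hbot : Tendsto (fun x => ∑ z ∈ Z, exp (F z * x)) atBot (nhds 0) := by
    simpa using tendsto_finsetSum Z fun z hz =>
      tendsto_exp_atBot.comp ((tendsto_const_mul_atBot_of_pos (hF z hz)).mpr tendsto_id)
  obtain ⟨a, ha⟩ := (hbot.eventually_lt_const one_pos).exists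
  refine mem_range_of_exists_le_of_exists_ge hcont ⟨a, ha.le⟩ ⟨0, ?_⟩
  simpa using hZ.card_pos

end SumExp

theorem tendsto_exp_mul_sub_of_sum_exp_eq_one {Y : Type*} [Fintype Y] [DecidableEq Y]
    {F μ : Y → ℝ} (hF : ∀ s, 0 < F s) {Z : Finset Y} {m : ℝ}
    (hμZ : ∀ z ∈ Z, μ z = m) (hμ : ∀ s ∉ Z, μ s < m)
    {b : ℝ → ℝ} (hb : ∀ r, ∑ s, exp (F s * (r * μ s - b r)) = 1)
    {x : ℝ} (hx : ∑ z ∈ Z, exp (F z * x) = 1) (s : Y) :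
    Tendsto (fun r => exp (F s * (r * μ s - b r))) atTop
      (nhds (if s ∈ Z then exp (F s * x) else 0)) := by
  have hZ : Z.Nonempty := nonempty_of_sum_ne_zero (hx ▸ one_ne_zero)
  have hφ : ∀ r, r * m - b r ≤ 0 := by
    intro r
    obtain ⟨z, hz⟩ := hZ
    have hle : exp (F z * (r * μ z - b r)) ≤ 1 := hb r ▸
      single_le_sum (f := fun s => exp (F s * (r * μ s - b r))) (fun _ _ => (exp_pos _).le)
        (mem_univ z)
    rw [hμZ z hz, exp_le_one_iff] at hle
    exact nonpos_of_mul_nonpos_right hle (hF z)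
  have hoff : ∀ s ∉ Z, Tendsto (fun r => exp (F s * (r * μ s - b r))) atTop (nhds 0) := by
    intro s hs
    have hneg : F s * (μ s - m) < 0 := mul_neg_of_pos_of_neg (hF s) (sub_neg.2 (hμ s hs))
    refine squeeze_zero (fun r => (exp_pos _).le) (fun r => exp_le_exp.2 ?_)
      (tendsto_exp_atBot.comp ((tendsto_const_mul_atBot_of_neg hneg).mpr tendsto_id))
    show F s * (r * μ s - b r) ≤ F s * (μ s - m) * r
    linear_combination mul_nonpos_of_nonneg_of_nonpos (hF s).le (hφ r)
  have hsplit : ∀ r, ∑ z ∈ Z, exp (F z * (r * m - b r))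
      = 1 - ∑ s ∈ Zᶜ, exp (F s * (r * μ s - b r)) := by
    intro r
    rw [← hb r, ← sum_add_sum_compl Z, add_sub_cancel_right]
    exact sum_congr rfl fun z hz => by rw [hμZ z hz]
  have hφlim : Tendsto (fun r => r * m - b r) atTop (nhds x) := by
    refine (strictMono_sum_exp_mul hZ fun z _ => hF z).tendsto_of_tendsto_comp ?_
    have hoffsum := tendsto_finsetSum Zᶜ fun s hs => hoff s (mem_compl.1 hs)
    simpa [Function.comp_def, hsplit, hx] using tendsto_const_nhds.sub hoffsum
  split_ifs with hs
  · simp_rw [hμZ s hs]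
    exact ((continuous_exp.comp (continuous_const_mul (F s))).tendsto x).comp hφlim
  · exact hoff s hs

theorem stmt18_general (n : ℕ) (Y : Type*) [Fintype Y]
    (F : Y → ℝ) (hF : ∀ s, 0 < F s) (c : Y → EuclideanSpace ℝ (Fin n))
    (B : EuclideanSpace ℝ (Fin n) → ℝ)
    (hB : ∀ u, 0 < B u ∧ ∑ s, Real.exp (-(B u * F s) + ⟪u, c s⟫_ℝ) = 1)
    (Z : Finset Y) (hZ : Z.Nonempty)
    (hmax : ∀ Z' : Finset Y, Mcone F c Z = Mcone F c Z' → Z' ⊆ Z)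
    (v : EuclideanSpace ℝ (Fin n)) (hv : v ∈ intrinsicInterior ℝ (Mcone F c Z)) :
    ∃ t : Y → ℝ, (∀ s, 0 ≤ t s) ∧ (∑ s, t s = 1) ∧
      (∀ s, t s ≠ 0 ↔ s ∈ Z) ∧
      (∀ s₁ ∈ Z, ∀ s₂ ∈ Z, t s₁ ^ (1 / F s₁) = t s₂ ^ (1 / F s₂)) ∧
      ∀ s, Filter.Tendsto (fun r : ℝ => Real.exp (-(B (r • v) * F s) + ⟪r • v, c s⟫_ℝ))
        Filter.atTop (nhds (t s)) := by
  classical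
  obtain ⟨z₀, hz₀⟩ := hZ
  obtain ⟨x, hx⟩ := exists_sum_exp_mul_eq_one ⟨z₀, hz₀⟩ fun z _ => hF z
  set μ : Y → ℝ := fun s => ⟪v, (F s)⁻¹ • c s⟫_ℝ
  have hexp : ∀ (r : ℝ) (s : Y),
      -(B (r • v) * F s) + ⟪r • v, c s⟫_ℝ = F s * (r * μ s - B (r • v)) := by
    intro r s
    simp only [μ, real_inner_smul_left, real_inner_smul_right]
    field_simp [(hF s).ne']
    ring
  have hμZ : ∀ z ∈ Z, μ z = μ z₀ := fun z hz =>
    (mem_Mcone_iff.1 (intrinsicInterior_subset hv)).2 z₀ hz₀ z hz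
  have hμ : ∀ s ∉ Z, μ s < μ z₀ := fun s hs =>
    inner_lt_of_mem_intrinsicInterior_Mcone hmax hv hs hz₀
  refine ⟨fun s => if s ∈ Z then exp (F s * x) else 0, fun s => by positivity, ?_, fun s => ?_,
    fun s₁ h₁ s₂ h₂ => ?_, fun s => ?_⟩
  · rw [sum_ite_mem, univ_inter, hx]
  · by_cases hs : s ∈ Z <;> simp [hs, exp_ne_zero]
  · have hroot : ∀ s, exp (F s * x) ^ (1 / F s) = exp x := fun s => by
      rw [← exp_mul, mul_right_comm, mul_one_div_cancel (hF s).ne', one_mul]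
    simp only [if_pos h₁, if_pos h₂, hroot]
  · simp_rw [hexp]
    exact tendsto_exp_mul_sub_of_sum_exp_eq_one hF hμZ hμ
      (fun r => by simpa only [hexp] using (hB (r • v)).2) hx s

theorem stmt18 (n : ℕ) (hn : 0 < n) (Y : Type*) [Fintype Y] (hY : 2 ≤ Fintype.card Y)
    (F : Y → ℝ) (hF : ∀ s, 0 < F s) (c : Y → EuclideanSpace ℝ (Fin n))
    (hc : ∀ v : EuclideanSpace ℝ (Fin n), ‖v‖ = 1 → ∃ s, 0 < ⟪v, c s⟫_ℝ)
    (B : EuclideanSpace ℝ (Fin n) → ℝ)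
    (hB : ∀ u, 0 < B u ∧ ∑ s, Real.exp (-(B u * F s) + ⟪u, c s⟫_ℝ) = 1)
    (Z : Finset Y) (hZ : Z.Nonempty)
    (hmax : ∀ Z' : Finset Y, Mcone F c Z = Mcone F c Z' → Z' ⊆ Z)
    (hdim : Mcone F c Z ≠ {0})
    (v : EuclideanSpace ℝ (Fin n)) (hv : v ∈ intrinsicInterior ℝ (Mcone F c Z)) :
    ∃ t : Y → ℝ, (∀ s, 0 ≤ t s) ∧ (∑ s, t s = 1) ∧
      (∀ s, t s ≠ 0 ↔ s ∈ Z) ∧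
      (∀ s₁ ∈ Z, ∀ s₂ ∈ Z, t s₁ ^ (1 / F s₁) = t s₂ ^ (1 / F s₂)) ∧
      ∀ s, Filter.Tendsto (fun r : ℝ => Real.exp (-(B (r • v) * F s) + ⟪r • v, c s⟫_ℝ))
        Filter.atTop (nhds (t s)) :=
  stmt18_general n Y F hF c B hB Z hZ hmax v hv
end

section
/- Let Y be a finite set and m a Borel probability measure on the product space Y^ℕ such that for some probability vector p : Y → [0,1] with ∑_y p(y) = 1, m(tY^ℕ) = ∏_{i=1}^n p(t_i) for every finite word t = (t_1,…,t_n) ∈ Yⁿ (m is Bernoulli). Let G be a group generated by Y as a semigroup, F : Y → ℝ, β ∈ ℝ, and suppose m satisfies the KMS condition: e^{βF(t)} m(tY^ℕ) = e^{βF(u)} m(uY^ℕ) whenever finite words t, u satisfy t̄ = ū in G (where t̄ is the product of the letters of t and F(t) = ∑_i F(t_i)). Then the function ψ : G → [0,∞) defined by ψ_g = e^{βF(t)} m(tY^ℕ) for any word t with t̄ = g is multiplicative: ψ_{gh} = ψ_g ψ_h for all g, h ∈ G. -/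
open Real MeasureTheory
open scoped BigOperators

/-! For a Bernoulli measure the Boltzmann-weighted mass `exp (β F(t)) m(tY^ℕ)` of a cylinder is
multiplicative under concatenation of words, and concatenating words representing `g` and `h`
gives a word representing `g * h`. -/

theorem exp_mul_sum_mul_prod_append {Y : Type*} (F p : Y → ℝ) (β : ℝ) (l l' : List Y) :
    exp (β * ((l ++ l').map F).sum) * ((l ++ l').map p).prod =
      (exp (β * (l.map F).sum) * (l.map p).prod) *
        (exp (β * (l'.map F).sum) * (l'.map p).prod) := by
  rw [List.map_append, List.map_append, List.sum_append, List.prod_append, mul_add, exp_add]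
  ring

theorem stmt19_general (Y : Type*) [MeasurableSpace Y]
    (G : Type*) [Group G] (ι : Y → G)
    (hgen : ∀ g : G, ∃ l : List Y, (l.map ι).prod = g)
    (F : Y → ℝ) (β : ℝ)
    (m : MeasureTheory.Measure (ℕ → Y))
    (p : Y → ℝ)
    (hBern : ∀ l : List Y,
      (m {ω : ℕ → Y | ∀ i : Fin l.length, ω (i : ℕ) = l.get i}).toReal = (l.map p).prod)
    (ψ : G → ℝ)
    (hψ : ∀ (g : G) (l : List Y), (l.map ι).prod = g →
      ψ g = Real.exp (β * (l.map F).sum) *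
        (m {ω : ℕ → Y | ∀ i : Fin l.length, ω (i : ℕ) = l.get i}).toReal) :
    ∀ g h, ψ (g * h) = ψ g * ψ h := by
  intro g h
  obtain ⟨l, rfl⟩ := hgen g
  obtain ⟨l', rfl⟩ := hgen h
  have happend : ((l ++ l').map ι).prod = (l.map ι).prod * (l'.map ι).prod := by
    rw [List.map_append, List.prod_append]
  rw [hψ _ _ happend, hψ _ l rfl, hψ _ l' rfl, hBern, hBern, hBern]
  exact exp_mul_sum_mul_prod_append F p β l l'

theorem stmt19 (Y : Type*) [Fintype Y] [MeasurableSpace Y]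
    (G : Type*) [Group G] (ι : Y → G)
    (hgen : ∀ g : G, ∃ l : List Y, (l.map ι).prod = g)
    (F : Y → ℝ) (β : ℝ)
    (m : MeasureTheory.Measure (ℕ → Y)) [MeasureTheory.IsProbabilityMeasure m]
    (p : Y → ℝ) (hp0 : ∀ s, 0 ≤ p s ∧ p s ≤ 1) (hp1 : ∑ s, p s = 1)
    (hBern : ∀ l : List Y,
      (m {ω : ℕ → Y | ∀ i : Fin l.length, ω (i : ℕ) = l.get i}).toReal = (l.map p).prod)
    (hKMS : ∀ l l' : List Y, (l.map ι).prod = (l'.map ι).prod →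
      Real.exp (β * (l.map F).sum) *
          (m {ω : ℕ → Y | ∀ i : Fin l.length, ω (i : ℕ) = l.get i}).toReal =
        Real.exp (β * (l'.map F).sum) *
          (m {ω : ℕ → Y | ∀ i : Fin l'.length, ω (i : ℕ) = l'.get i}).toReal)
    (ψ : G → ℝ)
    (hψ : ∀ (g : G) (l : List Y), (l.map ι).prod = g →
      ψ g = Real.exp (β * (l.map F).sum) *
        (m {ω : ℕ → Y | ∀ i : Fin l.length, ω (i : ℕ) = l.get i}).toReal) :
    ∀ g h, ψ (g * h) = ψ g * ψ h :=
  stmt19_general Y G ι hgen F β m p hBern ψ hψ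
end
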